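/- arXiv:1704.01907 — 4 statements merged into one kernel-verified Lean document; each statement's English description precedes it below -/
import Mathlib

section
/- For every assignment of states (occupied or vacant) to the squares of Λ = {1,…,m} × {1,…,n}, exactly one of the following two events occurs: Λ contains an occupied plus connected left-right crossing, or Λ contains a vacant star connected top-down crossing. -/
/-- Star adjacency on squares of the array: share at least a corner. -/
def starAdj (i j : ℤ × ℤ) : Prop := max |i.1 - j.1| |i.2 - j.2| = 1

/-- Plus adjacency on squares of the array: share an edge. -/
def plusAdj (i j : ℤ × ℤ) : Prop := |i.1 - j.1| + |i.2 - j.2| = 1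

/-- Membership in the rectangular array `Λ = {1,…,m} × {1,…,n}`. -/
def inRect (m n : ℤ) (k : ℤ × ℤ) : Prop :=
  1 ≤ k.1 ∧ k.1 ≤ m ∧ 1 ≤ k.2 ∧ k.2 ≤ n

/-- A left-right crossing of `Λ = {1,…,m} × {1,…,n}` with respect to the adjacency
`adj`: a sequence of pairwise distinct squares of `Λ` with consecutive squares
adjacent, whose first square is the unique one with first coordinate `1` and whose
last square is the unique one with first coordinate `m`. -/
def IsLRCrossing (adj : ℤ × ℤ → ℤ × ℤ → Prop) (m n : ℤ) (J : List (ℤ × ℤ)) : Prop :=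
  J ≠ [] ∧ J.Nodup ∧ J.Chain' adj ∧ (∀ k ∈ J, inRect m n k) ∧
  (∀ k ∈ J, (k.1 = 1 ↔ J.head? = some k)) ∧
  (∀ k ∈ J, (k.1 = m ↔ J.getLast? = some k))

/-- A top-down crossing of `Λ = {1,…,m} × {1,…,n}` with respect to the adjacency
`adj`: a sequence of pairwise distinct squares of `Λ` with consecutive squares
adjacent, whose first square is the unique one with second coordinate `n` and whose
last square is the unique one with second coordinate `1`. -/
def IsTDCrossing (adj : ℤ × ℤ → ℤ × ℤ → Prop) (m n : ℤ) (J : List (ℤ × ℤ)) : Prop :=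
  J ≠ [] ∧ J.Nodup ∧ J.Chain' adj ∧ (∀ k ∈ J, inRect m n k) ∧
  (∀ k ∈ J, (k.2 = n ↔ J.head? = some k)) ∧
  (∀ k ∈ J, (k.2 = 1 ↔ J.getLast? = some k))

/-!
Exclusivity is a discrete Jordan curve argument. Prolong a vacant star top-down crossing by one
square above row `n` and one below row `1`, to a star path `C`. For a square `z` off `C`, the parity
of the number of steps of `C` crossing the half-line that runs left from the lower edge of `z` is
unchanged by a plus step of `z` avoiding `C`; it is `0` in column `1` and `1` in column `m`, so an
occupied plus left-right crossing must meet `C`.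

Existence is by exploration. Declare the squares left of `Λ` up to row `n` occupied and all other
squares outside `Λ` vacant, and walk, starting between `(0, n + 1)` and `(0, n)`, along edges with
a vacant square on the left and an occupied one on the right. Each step can be undone, and the
start has no admissible predecessor, so the walk never repeats itself; as it stays in a bounded box
while above row `0`, it reaches row `0`. Its right squares are joined to column `0` by occupied
plus paths and its left squares to row `n + 1` by vacant star paths. Without an occupied crossing
the right squares stay left of column `m`, so the vacant path to row `0` runs through `Λ` and
contains a vacant top-down crossing.
-/

open Relation

namespace Relation.ReflTransGen

variable {α : Type*} {r : α → α → Prop} {a b : α}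

theorem of_and_right {P : α → Prop} (h : ReflTransGen (fun x y => r x y ∧ P y) a b) (ha : P a) :
    P b := by
  induction h with
  | refl => exact ha
  | tail _ hcb _ => exact hcb.2

theorem exists_last_entry {Q : α → Prop} (h : ReflTransGen r a b) (ha : ¬Q a) (hb : Q b) :
    ∃ c d, ¬Q c ∧ r c d ∧ Q d ∧ ReflTransGen (fun x y => r x y ∧ Q y) d b := by
  induction h with
  | refl => exact absurd hb ha
  | @tail c b _ hcb ih =>
    by_cases hc : Q c
    · obtain ⟨c', d, hc', hcd, hd, hdc⟩ := ih hc
      exact ⟨c', d, hc', hcd, hd, hdc.tail ⟨hcb, hb⟩⟩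
    · exact ⟨c, b, hc, hcb, hb, refl⟩

theorem exists_first_exit {Q : α → Prop} (h : ReflTransGen r a b) (ha : Q a) (hb : ¬Q b) :
    ∃ c d, Q c ∧ r c d ∧ ¬Q d ∧ ReflTransGen (fun x y => r x y ∧ Q y) a c := by
  induction h using head_induction_on with
  | refl => exact absurd ha hb
  | @head a c hac _ ih =>
    by_cases hc : Q c
    · obtain ⟨c', d, hc', hcd, hd, hcc'⟩ := ih hc
      exact ⟨c', d, hc', hcd, hd, head ⟨hac, hc⟩ hcc'⟩
    · exact ⟨a, c, ha, hac, hc, refl⟩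

theorem exists_excursion {A B : α → Prop} (h : ReflTransGen r a b) (hb : B b) :
    ∃ a' b', (a' = a ∨ A a') ∧ ReflTransGen r a a' ∧ B b' ∧
      ReflTransGen (fun x y => r x y ∧ ¬A y ∧ ¬B x) a' b' := by
  induction h using head_induction_on with
  | refl => exact ⟨b, b, .inl rfl, refl, hb, refl⟩
  | @head a c hac hcb ih =>
    obtain ⟨a', b', rfl | ha', hca', hb', h'⟩ := ih
    · by_cases hBa : B a
      · exact ⟨a, a, .inl rfl, refl, hBa, refl⟩
      by_cases hAc : A a'
      · exact ⟨a', b', .inr hAc, single hac, hb', h'⟩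
      · exact ⟨a, b', .inl rfl, refl, hb', head ⟨hac, hAc, hBa⟩ h'⟩
    · exact ⟨a', b', .inr ha', head hac hca', hb', h'⟩

theorem exists_nodup_chain (h : ReflTransGen r a b) :
    ∃ J : List α, J.head? = some a ∧ J.getLast? = some b ∧ J.Nodup ∧ J.IsChain r ∧
      ∀ k ∈ J, ReflTransGen r a k ∧ ReflTransGen r k b := by
  induction h using head_induction_on with
  | refl => exact ⟨[b], rfl, rfl, List.nodup_singleton b, .singleton b, by simp [refl]⟩
  | @head a c hac hcb ih =>
    obtain ⟨J, hJc, hJb, hJnd, hJr, hJmem⟩ := ih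
    by_cases haJ : a ∈ J
    · obtain ⟨u, w, rfl⟩ := List.append_of_mem haJ
      refine ⟨a :: w, rfl, by simpa [List.getLast?_append] using hJb,
        hJnd.sublist (List.sublist_append_right u _), hJr.suffix (List.suffix_append u _),
        fun k hk => ⟨head hac (hJmem k (by simp_all)).1, (hJmem k (by simp_all)).2⟩⟩
    · have hJ : J ≠ [] := by rintro rfl; simp at hJc
      refine ⟨a :: J, rfl, by simp [List.getLast?_cons, hJb], List.nodup_cons.2 ⟨haJ, hJnd⟩,
        List.isChain_cons.2 ⟨by simp [hJc, hac], hJr⟩, ?_⟩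
      rintro k (_ | ⟨_, hk⟩)
      · exact ⟨refl, head hac hcb⟩
      · exact ⟨head hac (hJmem k hk).1, (hJmem k hk).2⟩

end Relation.ReflTransGen

section Crossing

variable {α : Type*}

def IsCrossing (r : α → α → Prop) (A B : α → Prop) (J : List α) : Prop :=
  J ≠ [] ∧ J.Nodup ∧ J.IsChain r ∧ (∀ k ∈ J, A k ↔ J.head? = some k) ∧
    (∀ k ∈ J, B k ↔ J.getLast? = some k)

theorem exists_isCrossing {r : α → α → Prop} {P A B : α → Prop} {a b : α}
    (h : ReflTransGen (fun x y => r x y ∧ P y) a b) (hPa : P a) (hAa : A a) (hBb : B b) :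
    ∃ J, IsCrossing r A B J ∧ ∀ k ∈ J, P k := by
  obtain ⟨a', b', ha', haa', hBb', h'⟩ := h.exists_excursion (A := A) hBb
  have hAa' : A a' := ha'.elim (· ▸ hAa) id
  obtain ⟨J, hJa, hJb, hnd, hch, hmem⟩ := h'.exists_nodup_chain
  refine ⟨J, ⟨by rintro rfl; simp at hJa, hnd, hch.imp fun _ _ h => h.1.1,
    fun k hk => ⟨fun hA => ?_, fun hk' => ?_⟩, fun k hk => ⟨fun hB => ?_, fun hk' => ?_⟩⟩,
    fun k hk => (ReflTransGen.mono (fun _ _ h => h.1) _ _ (hmem k hk).1).of_and_right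
      (haa'.of_and_right hPa)⟩
  · rcases (hmem k hk).1.cases_tail with rfl | ⟨c, -, hck⟩
    · exact hJa
    · exact absurd hA hck.2.1
  · obtain rfl : a' = k := by simpa [hJa] using hk'
    exact hAa'
  · rcases (hmem k hk).2.cases_head with rfl | ⟨c, hkc, -⟩
    · exact hJb
    · exact absurd hB hkc.2.2
  · obtain rfl : b' = k := by simpa [hJb] using hk'
    exact hBb'

end Crossing

namespace List

variable {α : Type*}

theorem IsChain.eq_of_head?_of_getLast? {β : Type*} {r : α → α → Prop} {l : List α}
    {F : α → β} (hl : l.IsChain r) (hF : ∀ a ∈ l, ∀ b ∈ l, r a b → F a = F b) {a b : α}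
    (ha : l.head? = some a) (hb : l.getLast? = some b) : F a = F b :=
  (hl.imp_of_mem_imp (S := fun x y => F x = F y) fun x y hx hy => hF x hx y hy).induction
    (fun k => F a = F k) l (fun _ _ hxy hx => hx.trans hxy)
    (fun hne => by rw [head?_eq_some_head hne, Option.some_inj] at ha; rw [ha])
    b (mem_of_mem_getLast? hb)

def sumConsecutive (g : α → α → ℕ) : List α → ℕ
  | a :: b :: t => g a b + sumConsecutive g (b :: t)
  | _ => 0

theorem sumConsecutive_add (g g' : α → α → ℕ) :
    ∀ l : List α, sumConsecutive (g + g') l = sumConsecutive g l + sumConsecutive g' l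
  | [] | [_] => rfl
  | a :: b :: t => by
    simp only [sumConsecutive, sumConsecutive_add g g' (b :: t), Pi.add_apply]
    ring

theorem sumConsecutive_add_mod_two {g : α → α → ℕ} {f : α → ℕ} :
    ∀ {l : List α}, l.IsChain (fun a b => (g a b + f a + f b) % 2 = 0) →
      ∀ {a b : α}, l.head? = some a → l.getLast? = some b →
        (sumConsecutive g l + f a + f b) % 2 = 0
  | [], _, _, _, ha, _ => by simp at ha
  | [c], _, a, b, ha, hb => by
    obtain rfl : c = a := by simpa using ha
    obtain rfl : c = b := by simpa using hb
    simp only [sumConsecutive]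
    omega
  | c :: d :: t, hl, a, b, ha, hb => by
    obtain rfl : c = a := by simpa using ha
    rw [isChain_cons_cons] at hl
    have ih := sumConsecutive_add_mod_two hl.2 rfl (by simpa [getLast?_cons] using hb)
    simp only [sumConsecutive]
    omega

end List

theorem Function.injective_iterate_of_leftInvOn {β : Type*} {f g : β → β} {S : Set β} {x : β}
    (hS : ∀ N, f^[N] x ∈ S) (hgf : Set.LeftInvOn g f S) (hx : g x ∉ S) :
    Function.Injective fun N => f^[N] x := by
  have hne : ∀ i k, f^[i] x ≠ f^[i + k + 1] x := by
    intro i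
    induction i with
    | zero =>
      intro k h
      rw [Function.iterate_zero_apply, zero_add, Function.iterate_succ_apply'] at h
      exact hx (h ▸ (hgf (hS k)).symm ▸ hS k)
    | succ i ih =>
      intro k h
      rw [show i + 1 + k + 1 = i + k + 1 + 1 by omega, Function.iterate_succ_apply',
        Function.iterate_succ_apply'] at h
      exact ih k (by rw [← hgf (hS i), h, hgf (hS _)])
  intro i j h
  rcases lt_trichotomy i j with hij | rfl | hij
  · obtain ⟨k, rfl⟩ := Nat.exists_eq_add_of_lt hij
    exact absurd h (hne i k)
  · rfl
  · obtain ⟨k, rfl⟩ := Nat.exists_eq_add_of_lt hij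
    exact absurd h.symm (hne j k)

namespace SquareLattice

theorem plusAdj_iff {a b : ℤ × ℤ} :
    plusAdj a b ↔ (a.2 = b.2 ∧ (b.1 = a.1 + 1 ∨ a.1 = b.1 + 1)) ∨
      (a.1 = b.1 ∧ (b.2 = a.2 + 1 ∨ a.2 = b.2 + 1)) := by
  rw [plusAdj, abs_eq_max_neg, abs_eq_max_neg]
  omega

theorem starAdj_iff {a b : ℤ × ℤ} :
    starAdj a b ↔ (a.1 ≠ b.1 ∨ a.2 ≠ b.2) ∧ a.1 ≤ b.1 + 1 ∧ b.1 ≤ a.1 + 1 ∧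
      a.2 ≤ b.2 + 1 ∧ b.2 ≤ a.2 + 1 := by
  rw [starAdj, abs_eq_max_neg, abs_eq_max_neg]
  omega

-- Counts a step of a path that crosses the half-line running left from the lower edge of `z`.
def leftCross (z a b : ℤ × ℤ) : ℕ :=
  if (a.2 = z.2 ∧ b.2 = z.2 - 1 ∧ a.1 < z.1) ∨ (b.2 = z.2 ∧ a.2 = z.2 - 1 ∧ b.1 < z.1)
  then 1 else 0

def leftInRow (z k : ℤ × ℤ) : ℕ := if k.2 = z.2 ∧ k.1 < z.1 then 1 else 0

def notBelow (z k : ℤ × ℤ) : ℕ := if z.2 ≤ k.2 then 1 else 0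

def leftCrossings (C : List (ℤ × ℤ)) (z : ℤ × ℤ) : ℕ := C.sumConsecutive (leftCross z)

section LeftCross

variable {z a b : ℤ × ℤ}

theorem leftCross_right (ha : a ≠ z) (hb : b ≠ z) :
    leftCross (z.1 + 1, z.2) a b = leftCross z a b := by
  rw [Ne, Prod.ext_iff] at ha hb
  unfold leftCross
  split_ifs <;> omega

theorem leftCross_up_mod_two (hab : starAdj a b) (ha : a ≠ z) (hb : b ≠ z)
    (ha' : a ≠ (z.1, z.2 + 1)) (hb' : b ≠ (z.1, z.2 + 1)) :
    (leftCross z a b + leftCross (z.1, z.2 + 1) a b + leftInRow z a + leftInRow z b) % 2 = 0 := by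
  rw [starAdj_iff] at hab
  rw [Ne, Prod.ext_iff] at ha hb ha' hb'
  unfold leftCross leftInRow
  split_ifs <;> omega

theorem leftCross_eq_zero (ha : z.1 ≤ a.1) (hb : z.1 ≤ b.1) : leftCross z a b = 0 := by
  unfold leftCross
  split_ifs <;> omega

theorem leftCross_add_notBelow_mod_two (hab : starAdj a b) (ha : a ≠ z) (hb : b ≠ z)
    (ha₁ : a.1 ≤ z.1) (hb₁ : b.1 ≤ z.1) :
    (leftCross z a b + notBelow z a + notBelow z b) % 2 = 0 := by
  rw [starAdj_iff] at hab
  rw [Ne, Prod.ext_iff] at ha hb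
  unfold leftCross notBelow
  split_ifs <;> omega

end LeftCross

section Separation

variable {C : List (ℤ × ℤ)} {c₀ c₁ z : ℤ × ℤ}

theorem leftCrossings_right_mod_two (hC : C.IsChain starAdj) (hc₀ : C.head? = some c₀)
    (hc₁ : C.getLast? = some c₁) (hz : z ∉ C) :
    leftCrossings C (z.1 + 1, z.2) % 2 = leftCrossings C z % 2 := by
  have h := List.sumConsecutive_add_mod_two (g := leftCross z + leftCross (z.1 + 1, z.2)) (f := 0)
    (hC.imp_of_mem_imp fun a b ha hb _ => by
      simp only [Pi.add_apply, Pi.zero_apply, leftCross_right (ne_of_mem_of_not_mem ha hz)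
        (ne_of_mem_of_not_mem hb hz)]
      omega) hc₀ hc₁
  rw [List.sumConsecutive_add] at h
  simp only [Pi.zero_apply] at h
  unfold leftCrossings
  omega

theorem leftCrossings_up_mod_two (hC : C.IsChain starAdj) (hc₀ : C.head? = some c₀)
    (hc₁ : C.getLast? = some c₁) (hz : z ∉ C) (hz' : (z.1, z.2 + 1) ∉ C)
    (hc₀z : c₀.2 ≠ z.2) (hc₁z : c₁.2 ≠ z.2) :
    leftCrossings C (z.1, z.2 + 1) % 2 = leftCrossings C z % 2 := by
  have h := List.sumConsecutive_add_mod_two (g := leftCross z + leftCross (z.1, z.2 + 1))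
    (f := leftInRow z)
    (hC.imp_of_mem_imp fun a b ha hb hab => leftCross_up_mod_two hab (ne_of_mem_of_not_mem ha hz)
      (ne_of_mem_of_not_mem hb hz) (ne_of_mem_of_not_mem ha hz') (ne_of_mem_of_not_mem hb hz'))
    hc₀ hc₁
  rw [List.sumConsecutive_add] at h
  simp only [leftInRow, hc₀z, hc₁z, false_and, if_false] at h
  unfold leftCrossings
  omega

theorem leftCrossings_mod_two_eq_zero (hC : C.IsChain starAdj) (hc₀ : C.head? = some c₀)
    (hc₁ : C.getLast? = some c₁) (hx : ∀ k ∈ C, z.1 ≤ k.1) : leftCrossings C z % 2 = 0 := by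
  simpa [leftCrossings] using List.sumConsecutive_add_mod_two (g := leftCross z) (f := 0)
    (hC.imp_of_mem_imp fun a b ha hb _ => by simp [leftCross_eq_zero (hx a ha) (hx b hb)]) hc₀ hc₁

theorem leftCrossings_mod_two_eq_one (hC : C.IsChain starAdj) (hc₀ : C.head? = some c₀)
    (hc₁ : C.getLast? = some c₁) (hz : z ∉ C) (hx : ∀ k ∈ C, k.1 ≤ z.1)
    (hc₁z : c₁.2 < z.2) (hc₀z : z.2 < c₀.2) : leftCrossings C z % 2 = 1 := by
  have h := List.sumConsecutive_add_mod_two (g := leftCross z) (f := notBelow z)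
    (hC.imp_of_mem_imp fun a b ha hb hab => leftCross_add_notBelow_mod_two hab
      (ne_of_mem_of_not_mem ha hz) (ne_of_mem_of_not_mem hb hz) (hx a ha) (hx b hb))
    hc₀ hc₁
  simp only [notBelow, if_pos hc₀z.le, if_neg (not_le.2 hc₁z)] at h
  unfold leftCrossings
  omega

theorem exists_mem_of_isChain_starAdj_of_isChain_plusAdj {P : List (ℤ × ℤ)} {p₀ p₁ : ℤ × ℤ}
    (hC : C.IsChain starAdj) (hc₀ : C.head? = some c₀) (hc₁ : C.getLast? = some c₁)
    (hP : P.IsChain plusAdj) (hp₀ : P.head? = some p₀) (hp₁ : P.getLast? = some p₁)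
    (hCx : ∀ k ∈ C, p₀.1 ≤ k.1 ∧ k.1 ≤ p₁.1) (hPy : ∀ k ∈ P, c₁.2 < k.2 ∧ k.2 < c₀.2) :
    ∃ k ∈ C, k ∈ P := by
  by_contra! hdisj
  have hstep : ∀ x ∈ P, ∀ y ∈ P, plusAdj x y →
      leftCrossings C x % 2 = leftCrossings C y % 2 := by
    intro x hx y hy hxy
    have hxC : x ∉ C := fun h => hdisj x h hx
    have hyC : y ∉ C := fun h => hdisj y h hy
    have hxy₂ := hPy x hx
    have hyy₂ := hPy y hy
    rcases plusAdj_iff.1 hxy with ⟨h₂, h₁ | h₁⟩ | ⟨h₁, h₂ | h₂⟩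
    · obtain rfl : y = (x.1 + 1, x.2) := Prod.ext h₁ h₂.symm
      exact (leftCrossings_right_mod_two hC hc₀ hc₁ hxC).symm
    · obtain rfl : x = (y.1 + 1, y.2) := Prod.ext h₁ h₂
      exact leftCrossings_right_mod_two hC hc₀ hc₁ hyC
    · obtain rfl : y = (x.1, x.2 + 1) := Prod.ext h₁.symm h₂
      exact (leftCrossings_up_mod_two hC hc₀ hc₁ hxC hyC (by omega) (by omega)).symm
    · obtain rfl : x = (y.1, y.2 + 1) := Prod.ext h₁ h₂
      exact leftCrossings_up_mod_two hC hc₀ hc₁ hyC hxC (by omega) (by omega)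
  have hp₁P := List.mem_of_mem_getLast? hp₁
  have h₀ := leftCrossings_mod_two_eq_zero hC hc₀ hc₁ fun k hk => (hCx k hk).1
  have h₁ := leftCrossings_mod_two_eq_one hC hc₀ hc₁ (fun h => hdisj p₁ h hp₁P)
    (fun k hk => (hCx k hk).2) (hPy p₁ hp₁P).1 (hPy p₁ hp₁P).2
  have := hP.eq_of_head?_of_getLast? hstep hp₀ hp₁
  omega

end Separation

-- A state `(L, R)` is a vacant square `L` and an occupied square `R` sharing an edge, which the
-- exploration traverses in the direction `rot (R - L)`, keeping `L` on its left.
abbrev Edge := (ℤ × ℤ) × (ℤ × ℤ)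

def rot (v : ℤ × ℤ) : ℤ × ℤ := (-v.2, v.1)

def explore (η : ℤ × ℤ → Bool) (s : Edge) : Edge :=
  let d := rot (s.2 - s.1)
  if η (s.2 + d) = false then (s.2 + d, s.2)
  else if η (s.1 + d) = true then (s.1, s.1 + d)
  else (s.1 + d, s.2 + d)

def exploreBack (η : ℤ × ℤ → Bool) (s : Edge) : Edge :=
  let d := rot (s.2 - s.1)
  if η (s.2 - d) = false then (s.2 - d, s.2)
  else if η (s.1 - d) = false then (s.1 - d, s.2 - d)
  else (s.1, s.1 - d)

theorem explore_cases (η : ℤ × ℤ → Bool) (L R : ℤ × ℤ) :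
    (η (R + rot (R - L)) = false ∧ explore η (L, R) = (R + rot (R - L), R)) ∨
    (η (R + rot (R - L)) = true ∧ η (L + rot (R - L)) = true ∧
      explore η (L, R) = (L, L + rot (R - L))) ∨
    (η (R + rot (R - L)) = true ∧ η (L + rot (R - L)) = false ∧
      explore η (L, R) = (L + rot (R - L), R + rot (R - L))) := by
  unfold explore
  cases hB : η (R + rot (R - L)) <;> cases hA : η (L + rot (R - L)) <;> simp [hA, hB]

section Exploration

variable {η : ℤ × ℤ → Bool}

theorem exploreBack_explore {s : Edge} (hL : η s.1 = false) (hR : η s.2 = true) :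
    exploreBack η (explore η s) = s := by
  obtain ⟨L, R⟩ := s
  dsimp only at hL hR
  rcases explore_cases η L R with ⟨hB, he⟩ | ⟨hB, hA, he⟩ | ⟨hB, hA, he⟩ <;> rw [he, exploreBack]
  · have e : R - rot (R - (R + rot (R - L))) = L := by ext <;> simp [rot]
    simp only [e, hL, if_true]
  · have e₁ : L + rot (R - L) - rot (L + rot (R - L) - L) = R + rot (R - L) := by
      ext <;> simp [rot] <;> ring
    have e₂ : L - rot (L + rot (R - L) - L) = R := by ext <;> simp [rot]
    simp only [e₁, e₂, hB, hR]
    simp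
  · have e₁ : R + rot (R - L) - rot (R + rot (R - L) - (L + rot (R - L))) = R := by
      ext <;> simp [rot]
    have e₂ : L + rot (R - L) - rot (R + rot (R - L) - (L + rot (R - L))) = L := by
      ext <;> simp [rot]
    simp only [e₁, e₂, hR, hL]
    simp

theorem explore_spec {L R : ℤ × ℤ} (hL : η L = false) (hR : η R = true) (hLR : plusAdj L R) :
    ∃ L' R', explore η (L, R) = (L', R') ∧ η L' = false ∧ η R' = true ∧ plusAdj L' R' ∧
      ReflTransGen (fun x y => plusAdj x y ∧ η y = true) R R' ∧ (L' = L ∨ starAdj L L') := by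
  have hLR' := plusAdj_iff.1 hLR
  rcases explore_cases η L R with ⟨hB, he⟩ | ⟨hB, hA, he⟩ | ⟨hB, hA, he⟩ <;>
    [refine ⟨_, _, he, hB, hR, ?_, .refl, .inr ?_⟩;
     refine ⟨_, _, he, hL, hA, ?_, .tail (.single ⟨?_, hB⟩) ⟨?_, hA⟩, .inl rfl⟩;
     refine ⟨_, _, he, hA, hB, ?_, .single ⟨?_, hB⟩, .inr ?_⟩] <;>
  · simp only [plusAdj_iff, starAdj_iff, rot, Prod.fst_add, Prod.snd_add, Prod.fst_sub,
      Prod.snd_sub]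
    omega

end Exploration

def extend (m n : ℤ) (ω : ℤ × ℤ → Bool) (k : ℤ × ℤ) : Bool :=
  if k.1 ≤ 0 ∧ k.2 ≤ n then true
  else if 1 ≤ k.1 ∧ k.1 ≤ m ∧ 1 ≤ k.2 ∧ k.2 ≤ n then ω k
  else false

def start (n : ℤ) : Edge := ((0, n + 1), (0, n))

def IsExplored (m n : ℤ) (ω : ℤ × ℤ → Bool) (s : Edge) : Prop :=
  extend m n ω s.1 = false ∧ extend m n ω s.2 = true ∧ plusAdj s.1 s.2 ∧ 0 ≤ s.2.1 ∧
    ReflTransGen (fun x y => plusAdj x y ∧ extend m n ω y = true) (0, n) s.2 ∧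
    ReflTransGen (fun x y => starAdj x y ∧ extend m n ω y = false ∧ y.1 ≤ m) (0, n + 1) s.1

section Rectangle

variable {m n : ℤ} {ω : ℤ × ℤ → Bool} {k : ℤ × ℤ}

theorem extend_eq_true (h : extend m n ω k = true) :
    k.1 ≤ 0 ∧ k.2 ≤ n ∨ inRect m n k ∧ ω k = true := by
  unfold extend at h
  split_ifs at h with h₁ h₂
  exacts [.inl h₁, .inr ⟨h₂, h⟩]

theorem extend_eq_false (h : extend m n ω k = false) :
    ¬(k.1 ≤ 0 ∧ k.2 ≤ n) ∧ (inRect m n k → ω k = false) := by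
  unfold extend at h
  split_ifs at h with h₁ h₂
  exacts [⟨h₁, fun _ => h⟩, ⟨h₁, fun h₃ => absurd h₃ h₂⟩]

theorem extend_of_le (h₁ : k.1 ≤ 0) (h₂ : k.2 ≤ n) : extend m n ω k = true := by
  simp [extend, h₁, h₂]

theorem extend_of_lt (h : n < k.2) : extend m n ω k = false := by
  simp [extend, not_le.2 h]

theorem explore_extend_snd_nonneg {L R : ℤ × ℤ} (hL : extend m n ω L = false)
    (hR : extend m n ω R = true) (hLR : plusAdj L R) (hR₀ : 0 ≤ R.1) :
    0 ≤ (explore (extend m n ω) (L, R)).2.1 := by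
  have hL' := (extend_eq_false hL).1
  have hR' := extend_eq_true hR
  have hLR' := plusAdj_iff.1 hLR
  simp only [inRect] at hR'
  rcases explore_cases (extend m n ω) L R with ⟨-, he⟩ | ⟨-, hA, he⟩ | ⟨hA, -, he⟩ <;>
    rw [he]
  · exact hR₀
  all_goals
    have hA' := extend_eq_true hA
    simp only [inRect, rot, Prod.fst_add, Prod.snd_add, Prod.fst_sub, Prod.snd_sub] at hA' ⊢
    omega

theorem isExplored_start : IsExplored m n ω (start n) :=
  ⟨extend_of_lt (lt_add_one n), extend_of_le le_rfl le_rfl,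
    plusAdj_iff.2 (.inr ⟨rfl, .inr rfl⟩), le_rfl, .refl, .refl⟩

theorem exploreBack_start : exploreBack (extend m n ω) (start n) = ((-1, n + 1), (-1, n)) := by
  have h₁ : extend m n ω ((0, n) - rot ((0, n) - (0, n + 1))) = true :=
    extend_of_le (by simp [rot]) (by simp [rot])
  have h₂ : extend m n ω ((0, n + 1) - rot ((0, n) - (0, n + 1))) = false :=
    extend_of_lt (by simp [rot])
  simp only [exploreBack, start, h₁, h₂]
  ext <;> simp [rot]

theorem IsExplored.explore (hm : 1 ≤ m)
    (H : ∀ R, ReflTransGen (fun x y => plusAdj x y ∧ extend m n ω y = true) (0, n) R → R.1 ≠ m)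
    {s : Edge} (hs : IsExplored m n ω s) : IsExplored m n ω (explore (extend m n ω) s) := by
  obtain ⟨L, R⟩ := s
  obtain ⟨hL, hR, hLR, hR₀, hocc, hvac⟩ := hs
  obtain ⟨L', R', he, hL', hR', hLR', hRR', hLL'⟩ := explore_spec hL hR hLR
  have hR'₀ := explore_extend_snd_nonneg hL hR hLR hR₀
  rw [he] at hR'₀ ⊢
  refine ⟨hL', hR', hLR', hR'₀, hocc.trans hRR', ?_⟩
  rcases hLL' with rfl | hLL'
  · exact hvac
  · have hR'm := H R' (hocc.trans hRR')
    have hR'' := extend_eq_true hR'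
    have := plusAdj_iff.1 hLR'
    simp only [inRect] at hR''
    exact hvac.tail ⟨hLL', hL', by dsimp only; omega⟩

theorem exists_vacant_path_to_bottom (hm : 1 ≤ m)
    (H : ∀ R, ReflTransGen (fun x y => plusAdj x y ∧ extend m n ω y = true) (0, n) R → R.1 ≠ m) :
    ∃ L, ReflTransGen (fun x y => starAdj x y ∧ extend m n ω y = false ∧ y.1 ≤ m) (0, n + 1) L ∧
      L.2 ≤ 0 := by
  have hinv : ∀ N, IsExplored m n ω ((explore (extend m n ω))^[N] (start n)) := by
    intro N
    induction N with
    | zero => exact isExplored_start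
    | succ N ih => rw [Function.iterate_succ_apply']; exact ih.explore hm H
  -- The only candidate predecessor of `start` has its occupied square in column `-1`.
  have hinj := Function.injective_iterate_of_leftInvOn (f := explore (extend m n ω))
    (g := exploreBack (extend m n ω))
    (S := {s | extend m n ω s.1 = false ∧ extend m n ω s.2 = true ∧ 0 ≤ s.2.1})
    (fun N => ⟨(hinv N).1, (hinv N).2.1, (hinv N).2.2.2.1⟩)
    (fun s hs => exploreBack_explore hs.1 hs.2.1) (by simp [exploreBack_start])
  by_contra! hpos
  refine Set.infinite_range_of_injective hinj (Set.Finite.subset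
    (((Set.finite_Icc (-1) (m + 1)).prod (Set.finite_Icc 1 (n + 1))).prod
      ((Set.finite_Icc 0 m).prod (Set.finite_Icc 0 n))) ?_)
  rintro _ ⟨N, rfl⟩
  obtain ⟨hL, hR, hLR, hR₀, -, hvac⟩ := hinv N
  have hL₂ := hpos _ hvac
  have hR' := extend_eq_true hR
  have hLR' := plusAdj_iff.1 hLR
  simp only [inRect] at hR'
  simp only [Set.mem_prod, Set.mem_Icc]
  omega

theorem exists_LRCrossing_of_reflTransGen (hm : 1 ≤ m) {R : ℤ × ℤ}
    (h : ReflTransGen (fun x y => plusAdj x y ∧ extend m n ω y = true) (0, n) R) (hR : R.1 = m) :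
    ∃ J, IsLRCrossing plusAdj m n J ∧ ∀ k ∈ J, ω k = true := by
  have hP : ∀ {k}, extend m n ω k = true → 1 ≤ k.1 → inRect m n k ∧ ω k = true := fun hk hk₁ =>
    (extend_eq_true hk).resolve_left fun h => by omega
  obtain ⟨c, d, hc, hcd, hd, hdR⟩ :=
    h.exists_last_entry (Q := fun k => 1 ≤ k.1) (by simp) (by omega)
  have hd₁ : d.1 = 1 := by have := plusAdj_iff.1 hcd.1; omega
  obtain ⟨J, ⟨hne, hnd, hch, hA, hB⟩, hJ⟩ := exists_isCrossing (A := fun k => k.1 = 1)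
    (B := fun k => k.1 = m) (ReflTransGen.mono (fun _ _ h => ⟨h.1.1, hP h.1.2 h.2⟩) _ _ hdR)
    (hP hcd.2 hd) hd₁ hR
  exact ⟨J, ⟨hne, hnd, hch, fun k hk => (hJ k hk).1, hA, hB⟩, fun k hk => (hJ k hk).2⟩

theorem exists_TDCrossing_of_reflTransGen (hn : 1 ≤ n) {L : ℤ × ℤ}
    (h : ReflTransGen (fun x y => starAdj x y ∧ extend m n ω y = false ∧ y.1 ≤ m) (0, n + 1) L)
    (hL : L.2 ≤ 0) :
    ∃ J, IsTDCrossing starAdj m n J ∧ ∀ k ∈ J, ω k = false := by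
  have hP : ∀ {k}, extend m n ω k = false → k.1 ≤ m → 1 ≤ k.2 → k.2 ≤ n →
      inRect m n k ∧ ω k = false := fun {k} hk hk₁ hk₂ hk₃ =>
    have hr : inRect m n k := ⟨by have := (extend_eq_false hk).1; omega, hk₁, hk₂, hk₃⟩
    ⟨hr, (extend_eq_false hk).2 hr⟩
  obtain ⟨c, d, hc, hcd, hd, htc⟩ :=
    h.exists_first_exit (Q := fun k => 1 ≤ k.2) (by simp; omega) (by simp; omega)
  have hc₂ : c.2 = 1 := by have := starAdj_iff.1 hcd.1; omega
  obtain ⟨c', d', hc', hcd', hd', hdc⟩ :=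
    htc.exists_last_entry (Q := fun k => k.2 ≤ n) (by simp) (by omega)
  have hd'₂ : d'.2 = n := by have := starAdj_iff.1 hcd'.1.1; omega
  obtain ⟨J, ⟨hne, hnd, hch, hA, hB⟩, hJ⟩ := exists_isCrossing (A := fun k => k.2 = n)
    (B := fun k => k.2 = 1)
    (ReflTransGen.mono (fun _ _ h => ⟨h.1.1.1, hP h.1.1.2.1 h.1.1.2.2 h.1.2 h.2⟩) _ _ hdc)
    (hP hcd'.1.2.1 hcd'.1.2.2 hcd'.2 hd') hd'₂ hc₂
  exact ⟨J, ⟨hne, hnd, hch, fun k hk => (hJ k hk).1, hA, hB⟩, fun k hk => (hJ k hk).2⟩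

theorem exists_TDCrossing_of_not_LRCrossing (hm : 1 ≤ m) (hn : 1 ≤ n)
    (h : ¬∃ J, IsLRCrossing plusAdj m n J ∧ ∀ k ∈ J, ω k = true) :
    ∃ J, IsTDCrossing starAdj m n J ∧ ∀ k ∈ J, ω k = false := by
  obtain ⟨L, hL, hL₂⟩ := exists_vacant_path_to_bottom hm fun R hR hRm =>
    h (exists_LRCrossing_of_reflTransGen hm hR hRm)
  exact exists_TDCrossing_of_reflTransGen hn hL hL₂

theorem exists_starChain_of_isTDCrossing {Q : List (ℤ × ℤ)} (hQ : IsTDCrossing starAdj m n Q) :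
    ∃ C : List (ℤ × ℤ), ∃ c₀ c₁ : ℤ × ℤ, C.IsChain starAdj ∧ C.head? = some c₀ ∧
      C.getLast? = some c₁ ∧ c₀.2 = n + 1 ∧ c₁.2 = 0 ∧ (∀ k ∈ C, 1 ≤ k.1 ∧ k.1 ≤ m) ∧
      ∀ k ∈ C, inRect m n k → k ∈ Q := by
  obtain ⟨hne, -, hch, hrect, hhead, hlast⟩ := hQ
  have hq₀ := List.head?_eq_some_head hne
  have hq₁ := List.getLast?_eq_some_getLast hne
  have hq₀₂ := (hhead _ (List.head_mem hne)).2 hq₀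
  have hq₁₂ := (hlast _ (List.getLast_mem hne)).2 hq₁
  have hq₀r := hrect _ (List.head_mem hne)
  have hq₁r := hrect _ (List.getLast_mem hne)
  set q₀ := Q.head hne
  set q₁ := Q.getLast hne
  refine ⟨(q₀.1, n + 1) :: (Q ++ [(q₁.1, 0)]), (q₀.1, n + 1), (q₁.1, 0),
    List.isChain_cons.2 ⟨by simp [List.head?_append, hq₀, starAdj_iff]; omega,
      List.isChain_append.2 ⟨hch, .singleton _, by simp [hq₁, starAdj_iff]; omega⟩⟩,
    rfl, by simp [List.getLast?_cons, List.getLast?_append], rfl, rfl, ?_, ?_⟩ <;>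
    simp only [List.mem_cons, List.mem_append, List.not_mem_nil, or_false]
  · rintro k (rfl | hk | rfl)
    exacts [⟨hq₀r.1, hq₀r.2.1⟩, ⟨(hrect k hk).1, (hrect k hk).2.1⟩, ⟨hq₁r.1, hq₁r.2.1⟩]
  · rintro k (rfl | hk | rfl) hk'
    exacts [absurd hk'.2.2.2 (by simp), hk, absurd hk'.2.2.1 (by simp)]

theorem not_LRCrossing_and_TDCrossing {P Q : List (ℤ × ℤ)}
    (hP : IsLRCrossing plusAdj m n P) (hPω : ∀ k ∈ P, ω k = true)
    (hQ : IsTDCrossing starAdj m n Q) (hQω : ∀ k ∈ Q, ω k = false) : False := by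
  obtain ⟨hne, -, hch, hrect, hhead, hlast⟩ := hP
  obtain ⟨C, c₀, c₁, hC, hc₀, hc₁, hc₀₂, hc₁₂, hCx, hCQ⟩ :=
    exists_starChain_of_isTDCrossing hQ
  have hp₀ := List.head?_eq_some_head hne
  have hp₁ := List.getLast?_eq_some_getLast hne
  obtain ⟨k, hkC, hkP⟩ := exists_mem_of_isChain_starAdj_of_isChain_plusAdj hC hc₀ hc₁ hch hp₀ hp₁
    (fun k hk => by
      rw [(hhead _ (List.head_mem hne)).2 hp₀, (hlast _ (List.getLast_mem hne)).2 hp₁]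
      exact hCx k hk)
    (fun k hk => by have := hrect k hk; simp only [inRect] at this; omega)
  simpa [hQω k (hCQ k hkC (hrect k hkP))] using hPω k hkP

end Rectangle

end SquareLattice

/-- Exactly one of the following occurs: `Λ` contains an occupied plus connected
left-right crossing, or `Λ` contains a vacant star connected top-down crossing. -/
theorem occupied_plus_LR_xor_vacant_star_TD
    (m n : ℤ) (hm : 1 ≤ m) (hn : 1 ≤ n) (ω : ℤ × ℤ → Bool) :
    Xor' (∃ J : List (ℤ × ℤ), IsLRCrossing plusAdj m n J ∧ ∀ k ∈ J, ω k = true)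
         (∃ J : List (ℤ × ℤ), IsTDCrossing starAdj m n J ∧ ∀ k ∈ J, ω k = false) := by
  by_cases hLR : ∃ J : List (ℤ × ℤ), IsLRCrossing plusAdj m n J ∧ ∀ k ∈ J, ω k = true
  · obtain ⟨P, hP, hPω⟩ := hLR
    exact .inl ⟨⟨P, hP, hPω⟩, fun ⟨Q, hQ, hQω⟩ =>
      SquareLattice.not_LRCrossing_and_TDCrossing hP hPω hQ hQω⟩
  · exact .inr ⟨SquareLattice.exists_TDCrossing_of_not_LRCrossing hm hn hLR, hLR⟩
end

section
/- For every assignment of states (occupied or vacant) to the squares of Λ = {1,…,m} × {1,…,n}, Λ cannot simultaneously contain an occupied star connected left-right crossing and a vacant plus connected top-down crossing. -/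
/-!
A plus path `L` from the top of a strip to strictly below it splits the strip into a left and a
right part. The side of a square `z` off `L` is detected by the parity of the number of times `L`
crosses the leftward horizontal ray from the midpoint of the bottom edge of `z`. This parity is
`0` left of `L` (the ray misses `L`), it is `1` right of `L` (the ray cuts every level change
of `L`, and `L` starts above and ends below the ray), and it does not change along a star step
off `L`. Hence a star path can only get from the left side to the right side through `L`.
-/

namespace CrossingDuality

open List

section ChainSum

variable {α M : Type*}

def chainSum [AddCommMonoid M] (f : α → α → M) : List α → M
  | a :: b :: l => f a b + chainSum f (b :: l)
  | _ => 0

theorem chainSum_sub [AddCommGroup M] (f g : α → α → M) :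
    ∀ l : List α, chainSum (fun a b => f a b - g a b) l = chainSum f l - chainSum g l
  | [] | [_] => by simp [chainSum]
  | a :: b :: l => by
      simp only [chainSum, chainSum_sub f g (b :: l)]
      abel

theorem chainSum_eq_zero [AddCommMonoid M] {f : α → α → M} :
    ∀ {l : List α}, (∀ a ∈ l, ∀ b, f a b = 0) → chainSum f l = 0
  | [], _ | [_], _ => rfl
  | a :: b :: l, h => by
      rw [chainSum, h a mem_cons_self, chainSum_eq_zero fun x hx => h x (mem_cons_of_mem a hx),
        add_zero]

theorem chainSum_telescope [AddCommGroup M] {f : α → α → M} {s : α → M} :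
    ∀ {l : List α}, IsChain (fun a b => f a b = s b - s a) l → (hl : l ≠ []) →
      chainSum f l = s (l.getLast hl) - s (l.head hl)
  | [a], _, _ => by simp [chainSum]
  | a :: b :: l, h, _ => by
      rw [isChain_cons_cons] at h
      rw [chainSum, chainSum_telescope h.2 (cons_ne_nil b l), h.1, getLast_cons (cons_ne_nil b l)]
      simp only [head_cons]
      abel

end ChainSum

section Adjacency

theorem plusAdj_iff {p q : ℤ × ℤ} :
    plusAdj p q ↔ p.1 = q.1 ∧ (p.2 = q.2 + 1 ∨ q.2 = p.2 + 1) ∨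
      p.2 = q.2 ∧ (p.1 = q.1 + 1 ∨ q.1 = p.1 + 1) := by
  unfold plusAdj
  rcases abs_cases (p.1 - q.1) with ⟨h1, _⟩ | ⟨h1, _⟩ <;>
    rcases abs_cases (p.2 - q.2) with ⟨h2, _⟩ | ⟨h2, _⟩ <;> omega

theorem starAdj_iff {z w : ℤ × ℤ} :
    starAdj z w ↔ z ≠ w ∧ |z.1 - w.1| ≤ 1 ∧ |z.2 - w.2| ≤ 1 := by
  rw [starAdj, Ne, Prod.ext_iff, abs_le, abs_le]
  rcases abs_cases (z.1 - w.1) with ⟨h1, _⟩ | ⟨h1, _⟩ <;>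
    rcases abs_cases (z.2 - w.2) with ⟨h2, _⟩ | ⟨h2, _⟩ <;>
    rcases max_cases |z.1 - w.1| |z.2 - w.2| with ⟨h, _⟩ | ⟨h, _⟩ <;> omega

end Adjacency

section RayParity

/-- Whether the unit step `p → q` crosses the leftward horizontal ray from the midpoint of the
bottom edge of `z`. -/
def rayCrossing (z p q : ℤ × ℤ) : ZMod 2 :=
  if p.1 = q.1 ∧ p.1 < z.1 ∧ (p.2 = z.2 - 1 ∧ q.2 = z.2 ∨ p.2 = z.2 ∧ q.2 = z.2 - 1)
  then 1 else 0

def crossingParity (z : ℤ × ℤ) (L : List (ℤ × ℤ)) : ZMod 2 :=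
  chainSum (rayCrossing z) L

def below (z p : ℤ × ℤ) : ZMod 2 := if p.2 < z.2 then 1 else 0

/-- For star adjacent `z` and `w`, the squares enclosed by their two rays and the unit segment
joining the starting points of the rays. -/
def betweenRays (z w p : ℤ × ℤ) : ZMod 2 :=
  if p.2 = min z.2 w.2 ∧ p.2 < max z.2 w.2 ∧ p.1 < max z.1 w.1 then 1 else 0

-- A plus step avoiding `z` and `w` crosses exactly one of their rays iff it crosses the
-- boundary of the region between them.
theorem rayCrossing_sub_rayCrossing {z w p q : ℤ × ℤ} (hzw : starAdj z w) (hpq : plusAdj p q)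
    (hp : p ≠ z ∧ p ≠ w) (hq : q ≠ z ∧ q ≠ w) :
    rayCrossing w p q - rayCrossing z p q = betweenRays z w q - betweenRays z w p := by
  obtain ⟨hzw, h1, h2⟩ := starAdj_iff.mp hzw
  rw [abs_le] at h1 h2
  simp only [Ne, Prod.ext_iff] at hzw hp hq
  unfold rayCrossing betweenRays
  rcases plusAdj_iff.mp hpq with ⟨h, h' | h'⟩ | ⟨h, h' | h'⟩ <;>
    split_ifs <;> first | decide | (exfalso; omega)

theorem rayCrossing_of_fst_le {z p q : ℤ × ℤ} (hpq : plusAdj p q) (hp : p ≠ z ∧ p.1 ≤ z.1)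
    (hq : q ≠ z ∧ q.1 ≤ z.1) :
    rayCrossing z p q = below z q - below z p := by
  rw [plusAdj_iff] at hpq
  simp only [Ne, Prod.ext_iff] at hp hq
  unfold rayCrossing below
  split_ifs <;> first | decide | (exfalso; omega)

variable {L : List (ℤ × ℤ)} {z : ℤ × ℤ}

theorem crossingParity_eq_zero_of_le_fst (h : ∀ p ∈ L, z.1 ≤ p.1) : crossingParity z L = 0 :=
  chainSum_eq_zero fun p hp q => if_neg fun hcross => by linarith [h p hp, hcross.2.1]

theorem crossingParity_eq_one_of_fst_le (hL : IsChain plusAdj L) (hne : L ≠ []) (hz : z ∉ L)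
    (h : ∀ p ∈ L, p.1 ≤ z.1) (hz2 : z.2 ∈ Set.Ioc (L.getLast hne).2 (L.head hne).2) :
    crossingParity z L = 1 := by
  have hmem : ∀ p ∈ L, p ≠ z ∧ p.1 ≤ z.1 := fun p hp => ⟨ne_of_mem_of_not_mem hp hz, h p hp⟩
  rw [crossingParity, chainSum_telescope (s := below z) (hL.imp_of_mem_imp fun p q hp hq hpq =>
    rayCrossing_of_fst_le hpq (hmem p hp) (hmem q hq)) hne]
  rw [Set.mem_Ioc] at hz2
  simp only [below, if_pos hz2.1, if_neg (not_lt.mpr hz2.2)]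
  decide

theorem crossingParity_eq_of_starAdj (hL : IsChain plusAdj L) (hne : L ≠ []) {w : ℤ × ℤ}
    (hzw : starAdj z w) (hz : z ∉ L) (hw : w ∉ L)
    (hz2 : z.2 ∈ Set.Ioc (L.getLast hne).2 (L.head hne).2)
    (hw2 : w.2 ∈ Set.Ioc (L.getLast hne).2 (L.head hne).2) :
    crossingParity w L = crossingParity z L := by
  have hmem : ∀ p ∈ L, p ≠ z ∧ p ≠ w := fun p hp =>
    ⟨ne_of_mem_of_not_mem hp hz, ne_of_mem_of_not_mem hp hw⟩
  have key := chainSum_telescope (s := betweenRays z w) (hL.imp_of_mem_imp fun p q hp hq hpq =>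
    rayCrossing_sub_rayCrossing hzw hpq (hmem p hp) (hmem q hq)) hne
  have hends : ∀ p ∈ [L.getLast hne, L.head hne], betweenRays z w p = 0 := by
    rw [Set.mem_Ioc] at hz2 hw2
    simp only [mem_cons, not_mem_nil, or_false, forall_eq_or_imp, forall_eq, betweenRays]
    constructor <;> exact if_neg (by omega)
  rw [chainSum_sub, hends _ mem_cons_self, hends _ (mem_cons_of_mem _ mem_cons_self),
    sub_zero, sub_eq_zero] at key
  exact key

theorem exists_mem_of_plusPath_of_starPath {L Q : List (ℤ × ℤ)} (hL : IsChain plusAdj L)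
    (hLne : L ≠ []) (hQ : IsChain starAdj Q) (hQne : Q ≠ [])
    (hcols : ∀ p ∈ L, (Q.head hQne).1 ≤ p.1 ∧ p.1 ≤ (Q.getLast hQne).1)
    (hrows : ∀ z ∈ Q, z.2 ∈ Set.Ioc (L.getLast hLne).2 (L.head hLne).2) :
    ∃ z ∈ Q, z ∈ L := by
  by_contra! hQL
  have hzero : ∀ z ∈ Q, crossingParity z L = 0 := by
    refine (IsChain.iff_mem.mp hQ).induction _ _ ?_ fun _ =>
      crossingParity_eq_zero_of_le_fst fun p hp => (hcols p hp).1
    rintro z w ⟨hz, hw, hzw⟩ h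
    rwa [crossingParity_eq_of_starAdj hL hLne hzw (hQL z hz) (hQL w hw) (hrows z hz) (hrows w hw)]
  have hlast := getLast_mem hQne
  have hone := crossingParity_eq_one_of_fst_le hL hLne (hQL _ hlast) (fun p hp => (hcols p hp).2)
    (hrows _ hlast)
  exact one_ne_zero (hone.symm.trans (hzero _ hlast))

end RayParity

section Crossings

variable {adj : ℤ × ℤ → ℤ × ℤ → Prop} {m n : ℤ} {J : List (ℤ × ℤ)}

theorem IsLRCrossing.head_fst (h : IsLRCrossing adj m n J) (hne : J ≠ []) : (J.head hne).1 = 1 :=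
  (h.2.2.2.2.1 _ (head_mem hne)).mpr (head?_eq_some_head hne)

theorem IsLRCrossing.getLast_fst (h : IsLRCrossing adj m n J) (hne : J ≠ []) :
    (J.getLast hne).1 = m :=
  (h.2.2.2.2.2 _ (getLast_mem hne)).mpr (getLast?_eq_some_getLast hne)

theorem IsTDCrossing.head_snd (h : IsTDCrossing adj m n J) (hne : J ≠ []) : (J.head hne).2 = n :=
  (h.2.2.2.2.1 _ (head_mem hne)).mpr (head?_eq_some_head hne)

theorem IsTDCrossing.getLast_snd (h : IsTDCrossing adj m n J) (hne : J ≠ []) :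
    (J.getLast hne).2 = 1 :=
  (h.2.2.2.2.2 _ (getLast_mem hne)).mpr (getLast?_eq_some_getLast hne)

end Crossings

end CrossingDuality

open CrossingDuality

theorem not_occupied_star_LR_and_vacant_plus_TD_general
    (m n : ℤ) (ω : ℤ × ℤ → Bool) :
    ¬ ((∃ J : List (ℤ × ℤ), IsLRCrossing starAdj m n J ∧ ∀ k ∈ J, ω k = true) ∧
       (∃ J : List (ℤ × ℤ), IsTDCrossing plusAdj m n J ∧ ∀ k ∈ J, ω k = false)) := by
  rintro ⟨⟨Q, hQ, hQocc⟩, ⟨P, hP, hPvac⟩⟩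
  obtain ⟨hQne, -, hQchain, hQrect, -⟩ := id hQ
  obtain ⟨hPne, -, hPchain, hPrect, -⟩ := id hP
  set e := P.getLast hPne
  -- Appending the square below the end of `P` puts the rows of `Q` strictly between the rows of
  -- the two ends of the path.
  have hLne : P ++ [(e.1, 0)] ≠ [] := List.append_ne_nil_of_right_ne_nil _ (List.cons_ne_nil _ _)
  have hL : List.IsChain plusAdj (P ++ [(e.1, 0)]) :=
    hPchain.append (List.isChain_singleton _) fun x hx y hy => by
      simp only [List.getLast?_eq_some_getLast hPne, List.head?_cons, Option.mem_def,
        Option.some.injEq] at hx hy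
      subst hx hy
      simp [plusAdj, e, hP.getLast_snd hPne]
  have hcols : ∀ p ∈ P ++ [(e.1, 0)], (Q.head hQne).1 ≤ p.1 ∧ p.1 ≤ (Q.getLast hQne).1 := by
    simp only [hQ.head_fst, hQ.getLast_fst, List.mem_append, List.mem_singleton]
    rintro p (hp | rfl)
    · exact ⟨(hPrect p hp).1, (hPrect p hp).2.1⟩
    · exact ⟨(hPrect e (List.getLast_mem hPne)).1, (hPrect e (List.getLast_mem hPne)).2.1⟩
  have hrows : ∀ z ∈ Q, z.2 ∈ Set.Ioc ((P ++ [(e.1, 0)]).getLast hLne).2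
      ((P ++ [(e.1, 0)]).head hLne).2 := fun z hz => by
    rw [List.getLast_append_singleton, List.head_append_of_ne_nil hPne, hP.head_snd]
    exact ⟨(hQrect z hz).2.2.1, (hQrect z hz).2.2.2⟩
  obtain ⟨z, hzQ, hzL⟩ := exists_mem_of_plusPath_of_starPath hL hLne hQchain hQne hcols hrows
  rcases List.mem_append.mp hzL with hzP | hz
  · exact Bool.false_ne_true ((hPvac z hzP).symm.trans (hQocc z hzQ))
  · rw [List.mem_singleton.mp hz] at hzQ
    exact absurd (hQrect _ hzQ).2.2.1 (by simp)

/-- `Λ` cannot simultaneously contain an occupied star connected left-right crossing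
and a vacant plus connected top-down crossing. -/
theorem not_occupied_star_LR_and_vacant_plus_TD
    (m n : ℤ) (hm : 1 ≤ m) (hn : 1 ≤ n) (ω : ℤ × ℤ → Bool) :
    ¬ ((∃ J : List (ℤ × ℤ), IsLRCrossing starAdj m n J ∧ ∀ k ∈ J, ω k = true) ∧
       (∃ J : List (ℤ × ℤ), IsTDCrossing plusAdj m n J ∧ ∀ k ∈ J, ω k = false)) :=
  not_occupied_star_LR_and_vacant_plus_TD_general m n ω
end

section
/- For every assignment of states (occupied or vacant) to the squares of Λ = {1,…,m} × {1,…,n}, Λ cannot simultaneously contain an occupied plus connected left-right crossing and a vacant star connected top-down crossing. -/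
/-!
Close the vacant star crossing `Q` by one square above its top and one below its bottom: this
gives a king path `L` from row `n + 1` to row `0`. For a square `k` off `L`, count the steps of
`L` that cross the horizontal ray running left from the lower edge of `k`. The parity of this
count does not change under a plus move between squares off `L` (a step of `L` crossing only
one of the two rays passes through one of the two squares), it is zero in column `1` since
`L` stays in columns `≥ 1`, and odd in column `m` since there the ray meets every step of `L`
between rows `k.2 - 1` and `k.2`, and `L` goes from above to below. An occupied plus crossing
avoids `L` and would carry the parity from column `1` to column `m`.
-/

namespace List

variable {α : Type*}

theorem consecutivePairs_cons_cons (a b : α) (l : List α) :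
    (a :: b :: l).consecutivePairs = (a, b) :: (b :: l).consecutivePairs := rfl

theorem mem_of_mem_consecutivePairs {l : List α} {p : α × α} (hp : p ∈ l.consecutivePairs) :
    p.1 ∈ l ∧ p.2 ∈ l :=
  ⟨(of_mem_zip hp).1, tail_subset l (of_mem_zip hp).2⟩

theorem ne_of_mem_consecutivePairs {l : List α} {p : α × α} {a : α}
    (hp : p ∈ l.consecutivePairs) (ha : a ∉ l) : p.1 ≠ a ∧ p.2 ≠ a :=
  ⟨fun e => ha (e ▸ (mem_of_mem_consecutivePairs hp).1),
    fun e => ha (e ▸ (mem_of_mem_consecutivePairs hp).2)⟩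

theorem IsChain.rel_of_mem_consecutivePairs {R : α → α → Prop} :
    ∀ {l : List α}, l.IsChain R → ∀ p ∈ l.consecutivePairs, R p.1 p.2
  | [], _, _, hp | [_], _, _, hp => by simp [consecutivePairs] at hp
  | a :: b :: l, h, p, hp => by
    rw [isChain_cons_cons] at h
    rw [consecutivePairs_cons_cons, mem_cons] at hp
    rcases hp with rfl | hp
    exacts [h.1, h.2.rel_of_mem_consecutivePairs p hp]

theorem bodd_countP_xor (p q : α → Bool) (l : List α) :
    (l.countP fun a => p a ^^ q a).bodd = ((l.countP p).bodd ^^ (l.countP q).bodd) := by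
  induction l with
  | nil => simp
  | cons a l ih =>
    simp only [countP_cons, Nat.bodd_add, ih]
    cases p a <;> cases q a <;> simp [Bool.xor_comm]

theorem bodd_countP_consecutivePairs_bne (f : α → Bool) :
    ∀ {l : List α} (hl : l ≠ []),
      (l.consecutivePairs.countP fun p => f p.1 != f p.2).bodd
        = (f (l.head hl) != f (l.getLast hl))
  | [a], _ => by simp [consecutivePairs]
  | a :: b :: l, _ => by
    rw [consecutivePairs_cons_cons, countP_cons, Nat.bodd_add,
      bodd_countP_consecutivePairs_bne f (cons_ne_nil b l), getLast_cons_cons,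
      head_cons, head_cons]
    generalize f a = x, f b = y, f ((b :: l).getLast _) = z
    cases x <;> cases y <;> cases z <;> rfl

end List

def kingAdj (p q : ℤ × ℤ) : Prop := |p.1 - q.1| ≤ 1 ∧ |p.2 - q.2| ≤ 1

theorem kingAdj_of_starAdj {p q : ℤ × ℤ} (h : starAdj p q) : kingAdj p q :=
  ⟨h ▸ le_max_left _ _, h ▸ le_max_right _ _⟩

theorem plusAdj_iff {a b : ℤ × ℤ} :
    plusAdj a b ↔ b = (a.1 + 1, a.2) ∨ a = (b.1 + 1, b.2) ∨ b = (a.1, a.2 + 1) ∨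
      a = (b.1, b.2 + 1) := by
  obtain ⟨a1, a2⟩ := a
  obtain ⟨b1, b2⟩ := b
  simp only [plusAdj, Prod.mk.injEq]
  rcases abs_cases (a1 - b1) with h1 | h1 <;> rcases abs_cases (a2 - b2) with h2 | h2 <;> omega

/-- The segment joining the centres of the two squares of `s` meets the line at height
`y - 1/2` strictly to the left of `x`. -/
def crossesLeftOf (x y : ℤ) (s : (ℤ × ℤ) × (ℤ × ℤ)) : Bool :=
  decide (((s.1.2 = y - 1 ∧ s.2.2 = y) ∨ (s.1.2 = y ∧ s.2.2 = y - 1)) ∧ s.1.1 + s.2.1 < 2 * x)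

def crossings (L : List (ℤ × ℤ)) (x y : ℤ) : ℕ :=
  L.consecutivePairs.countP (crossesLeftOf x y)

/-- For a king path `L` running from above to below the rows considered, the parity of the
crossings to the left of a square tells on which side of `L` the square lies. -/
def side (L : List (ℤ × ℤ)) (k : ℤ × ℤ) : Bool := (crossings L k.1 k.2).bodd

section KingPath

variable {L : List (ℤ × ℤ)} {x y : ℤ}

theorem crossings_eq_zero_of_forall_le_fst (h : ∀ p ∈ L, x ≤ p.1) : crossings L x y = 0 :=
  List.countP_eq_zero.mpr fun s hs hcross => by
    have h1 := h _ (List.mem_of_mem_consecutivePairs hs).1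
    have h2 := h _ (List.mem_of_mem_consecutivePairs hs).2
    simp only [crossesLeftOf, decide_eq_true_eq] at hcross
    omega

theorem bodd_crossings_of_forall_fst_le (hL : L.IsChain kingAdj) (hne : L ≠ [])
    (h : ∀ p ∈ L, p.1 ≤ x) (hxy : (x, y) ∉ L) :
    (crossings L x y).bodd = (decide (y ≤ (L.head hne).2) != decide (y ≤ (L.getLast hne).2)) := by
  rw [← List.bodd_countP_consecutivePairs_bne (fun p => decide (y ≤ p.2)) hne, crossings,
    List.countP_congr]
  intro s hs
  have hadj := hL.rel_of_mem_consecutivePairs s hs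
  obtain ⟨h1, h2⟩ := List.ne_of_mem_consecutivePairs hs hxy
  have := h _ (List.mem_of_mem_consecutivePairs hs).1
  have := h _ (List.mem_of_mem_consecutivePairs hs).2
  simp only [kingAdj, abs_le] at hadj
  simp only [ne_eq, Prod.ext_iff] at h1 h2
  simp only [crossesLeftOf, decide_eq_true_eq, bne_iff_ne, ne_eq, decide_eq_decide]
  omega

theorem crossings_add_one_fst (hL : L.IsChain kingAdj) (h₀ : (x, y) ∉ L)
    (h₁ : (x + 1, y) ∉ L) : crossings L (x + 1) y = crossings L x y := by
  refine List.countP_congr fun s hs => ?_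
  have hadj := hL.rel_of_mem_consecutivePairs s hs
  obtain ⟨h01, h02⟩ := List.ne_of_mem_consecutivePairs hs h₀
  obtain ⟨h11, h12⟩ := List.ne_of_mem_consecutivePairs hs h₁
  simp only [kingAdj, abs_le] at hadj
  simp only [ne_eq, Prod.ext_iff] at h01 h02 h11 h12
  simp only [crossesLeftOf, decide_eq_true_eq]
  omega

theorem bodd_crossings_add_one_snd (hL : L.IsChain kingAdj) (hne : L ≠ []) (hxy : (x, y) ∉ L)
    (hhead : (L.head hne).2 ≠ y) (hlast : (L.getLast hne).2 ≠ y) :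
    (crossings L x (y + 1)).bodd = (crossings L x y).bodd := by
  have hflips := List.bodd_countP_consecutivePairs_bne
    (fun p : ℤ × ℤ => decide (p.2 = y ∧ p.1 < x)) hne
  rw [List.countP_congr (q := fun s => crossesLeftOf x y s ^^ crossesLeftOf x (y + 1) s),
    List.bodd_countP_xor] at hflips
  · simp only [hhead, hlast, false_and, decide_false, bne_self_eq_false] at hflips
    rw [crossings, crossings, ← Bool.xor_false (List.countP _ _).bodd, ← hflips]
    cases (List.countP (crossesLeftOf x y) _).bodd <;> simp
  intro s hs
  have hadj := hL.rel_of_mem_consecutivePairs s hs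
  obtain ⟨h1, h2⟩ := List.ne_of_mem_consecutivePairs hs hxy
  simp only [kingAdj, abs_le] at hadj
  simp only [ne_eq, Prod.ext_iff] at h1 h2
  simp only [crossesLeftOf, bne_iff_ne, ne_eq, decide_eq_decide, iff_iff_and_or_not_and_not]
  omega

theorem side_eq_of_plusAdj (hL : L.IsChain kingAdj) (hne : L ≠ []) {a b : ℤ × ℤ}
    (hab : plusAdj a b) (ha : a ∉ L) (hb : b ∉ L)
    (hrows : ∀ k ∈ [a, b], (L.getLast hne).2 < k.2 ∧ k.2 < (L.head hne).2) :
    side L a = side L b := by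
  have hra := hrows a (by simp)
  have hrb := hrows b (by simp)
  rcases plusAdj_iff.mp hab with rfl | rfl | rfl | rfl
  · rw [side, side, crossings_add_one_fst hL ha hb]
  · rw [side, side, crossings_add_one_fst hL hb ha]
  · exact (bodd_crossings_add_one_snd hL hne ha (by omega) (by omega)).symm
  · exact bodd_crossings_add_one_snd hL hne hb (by omega) (by omega)

theorem side_getLast_eq_side_head (hL : L.IsChain kingAdj) (hne : L ≠ []) {P : List (ℤ × ℤ)}
    (hP : P.IsChain plusAdj) (hPne : P ≠ []) (hPL : ∀ k ∈ P, k ∉ L)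
    (hrows : ∀ k ∈ P, (L.getLast hne).2 < k.2 ∧ k.2 < (L.head hne).2) :
    side L (P.getLast hPne) = side L (P.head hPne) := by
  have hside : P.IsChain fun a b => side L a = side L b :=
    hP.imp_of_mem_imp fun a b ha hb hab =>
      side_eq_of_plusAdj hL hne hab (hPL a ha) (hPL b hb) (by simp [hrows a ha, hrows b hb])
  exact hside.induction (fun k => side L k = side L (P.head hPne)) P
    (fun _ _ hab hk => hab ▸ hk) (fun _ => rfl) _ (P.getLast_mem hPne)

end KingPath

theorem IsTDCrossing.exists_kingPath {m n : ℤ} {Q : List (ℤ × ℤ)}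
    (hQ : IsTDCrossing starAdj m n Q) :
    ∃ L : List (ℤ × ℤ), ∃ hne : L ≠ [], L.IsChain kingAdj ∧ (L.head hne).2 = n + 1 ∧
      (L.getLast hne).2 = 0 ∧ (∀ p ∈ L, 1 ≤ p.1 ∧ p.1 ≤ m) ∧
      ∀ p ∈ L, 1 ≤ p.2 → p.2 ≤ n → p ∈ Q := by
  obtain ⟨hQne, -, hQch, hQrect, hQhead, hQlast⟩ := hQ
  obtain ⟨t, hth⟩ : ∃ t, Q.head? = some t := ⟨_, Q.head?_eq_some_head hQne⟩
  obtain ⟨b, hbl⟩ : ∃ b, Q.getLast? = some b := ⟨_, Q.getLast?_eq_some_getLast hQne⟩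
  have htQ := List.mem_of_mem_head? hth
  have hbQ := List.mem_of_getLast? hbl
  have ht : t.2 = n := (hQhead t htQ).mpr hth
  have hb : b.2 = 1 := (hQlast b hbQ).mpr hbl
  refine ⟨(t.1, n + 1) :: (Q ++ [(b.1, 0)]), List.cons_ne_nil _ _, ?_, rfl, by simp, ?_, ?_⟩
  · rw [List.isChain_cons, List.isChain_append, List.head?_append_of_ne_nil _ hQne, hth, hbl]
    refine ⟨?_, (hQch : Q.IsChain starAdj).imp fun _ _ => kingAdj_of_starAdj,
      List.isChain_singleton _, ?_⟩
    · simp [kingAdj, ht]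
    · simp [kingAdj, hb]
  · simp only [List.mem_cons, List.mem_append, List.not_mem_nil, or_false]
    rintro p (rfl | hp | rfl)
    exacts [⟨(hQrect t htQ).1, (hQrect t htQ).2.1⟩, ⟨(hQrect p hp).1, (hQrect p hp).2.1⟩,
      ⟨(hQrect b hbQ).1, (hQrect b hbQ).2.1⟩]
  · simp only [List.mem_cons, List.mem_append, List.not_mem_nil, or_false]
    rintro p (rfl | hp | rfl) h1 h2
    exacts [absurd h2 (by simp), hp, absurd h1 (by simp)]

theorem not_occupied_plus_LR_and_vacant_star_TD_general
    (m n : ℤ) (ω : ℤ × ℤ → Bool) :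
    ¬ ((∃ J : List (ℤ × ℤ), IsLRCrossing plusAdj m n J ∧ ∀ k ∈ J, ω k = true) ∧
       (∃ J : List (ℤ × ℤ), IsTDCrossing starAdj m n J ∧ ∀ k ∈ J, ω k = false)) := by
  rintro ⟨⟨P, ⟨hPne, -, hPch, hPrect, hPhead, hPlast⟩, hPocc⟩, ⟨Q, hQ, hQvac⟩⟩
  obtain ⟨L, hLne, hL, hLhead, hLlast, hLcols, hLQ⟩ := hQ.exists_kingPath
  have hPL : ∀ k ∈ P, k ∉ L := fun k hk hkL => by
    have hkQ := hLQ k hkL (hPrect k hk).2.2.1 (hPrect k hk).2.2.2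
    simpa [hPocc k hk] using hQvac k hkQ
  have hrows : ∀ k ∈ P, (L.getLast hLne).2 < k.2 ∧ k.2 < (L.head hLne).2 := fun k hk => by
    have := hPrect k hk
    rw [hLhead, hLlast]
    unfold inRect at this
    omega
  have hleft : side L (P.head hPne) = false := by
    have h1 : (P.head hPne).1 = 1 := (hPhead _ (P.head_mem hPne)).mpr (P.head?_eq_some_head hPne)
    rw [side, h1, crossings_eq_zero_of_forall_le_fst fun p hp => (hLcols p hp).1, Nat.bodd_zero]
  have hright : side L (P.getLast hPne) = true := by
    have hm : (P.getLast hPne).1 = m :=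
      (hPlast _ (P.getLast_mem hPne)).mpr (P.getLast?_eq_some_getLast hPne)
    obtain ⟨hbelow, habove⟩ := hrows _ (P.getLast_mem hPne)
    rw [side, hm, bodd_crossings_of_forall_fst_le hL hLne (fun p hp => (hLcols p hp).2)
      (by rw [← hm]; exact hPL _ (P.getLast_mem hPne))]
    simp [habove.le, not_le.mpr hbelow]
  have hconst := side_getLast_eq_side_head hL hLne hPch hPne hPL hrows
  rw [hleft, hright] at hconst
  exact Bool.noConfusion hconst

/-- `Λ` cannot simultaneously contain an occupied plus connected left-right crossing
and a vacant star connected top-down crossing. -/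
theorem not_occupied_plus_LR_and_vacant_star_TD
    (m n : ℤ) (hm : 1 ≤ m) (hn : 1 ≤ n) (ω : ℤ × ℤ → Bool) :
    ¬ ((∃ J : List (ℤ × ℤ), IsLRCrossing plusAdj m n J ∧ ∀ k ∈ J, ω k = true) ∧
       (∃ J : List (ℤ × ℤ), IsTDCrossing starAdj m n J ∧ ∀ k ∈ J, ω k = false)) :=
  not_occupied_plus_LR_and_vacant_star_TD_general m n ω
end

section
/- For every assignment of states (occupied or vacant) to the squares of Λ = {1,…,m} × {1,…,n}, if Λ contains no occupied plus connected left-right crossing, then Λ contains a vacant star connected top-down crossing. -/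
theorem plusAdj_comm {i j : ℤ × ℤ} : plusAdj i j ↔ plusAdj j i := by
  simp only [plusAdj, abs_sub_comm i.1, abs_sub_comm i.2]

theorem starAdj_comm {i j : ℤ × ℤ} : starAdj i j ↔ starAdj j i := by
  simp only [starAdj, abs_sub_comm i.1, abs_sub_comm i.2]

def plusGraph : SimpleGraph (ℤ × ℤ) where
  Adj := plusAdj
  symm := ⟨fun _ _ => plusAdj_comm.mp⟩
  loopless := ⟨fun _ => by simp [plusAdj]⟩

def starGraph : SimpleGraph (ℤ × ℤ) where
  Adj := starAdj
  symm := ⟨fun _ _ => starAdj_comm.mp⟩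
  loopless := ⟨fun _ => by simp [starAdj]⟩

namespace List

variable {α : Type*} (c : α → ℤ)

theorem exists_suffix_from_level (lo : ℤ) :
    ∀ {l : List α}, l.IsChain (fun a b => c b ≤ c a + 1) → (∃ k ∈ l, c k ≤ lo) →
      (∀ y ∈ l.getLast?, lo < c y) →
      ∃ x t, x :: t <:+ l ∧ c x = lo ∧ ∀ k ∈ t, lo < c k
  | [], _, ⟨_, hk, _⟩, _ => absurd hk not_mem_nil
  | x :: t, hl, hex, hlast => by
    by_cases ht : ∃ k ∈ t, c k ≤ lo
    · have ht_ne : t ≠ [] := by rintro rfl; simp at ht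
      obtain ⟨x', t', hsuf, hx', ht'⟩ := exists_suffix_from_level lo hl.tail ht
        (by rwa [getLast?_cons_of_ne_nil ht_ne] at hlast)
      exact ⟨x', t', hsuf.trans (suffix_cons x t), hx', ht'⟩
    · push Not at ht
      have hx : c x ≤ lo := by
        obtain ⟨k, hk, hck⟩ := hex
        rcases mem_cons.mp hk with rfl | hk
        · exact hck
        · exact absurd hck (ht k hk).not_ge
      cases t with
      | nil => exact absurd (hlast x (by simp)) hx.not_gt
      | cons y t =>
        have hxy := (isChain_cons_cons.mp hl).1
        have hy := ht y mem_cons_self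
        exact ⟨x, y :: t, suffix_refl _, by omega, ht⟩

theorem exists_prefix_to_level (hi : ℤ) :
    ∀ {x : α} {t : List α}, (x :: t).IsChain (fun a b => c b ≤ c a + 1) → c x ≤ hi →
      (∃ k ∈ x :: t, hi ≤ c k) →
      ∃ p z, p ++ [z] <+: x :: t ∧ c z = hi ∧ ∀ k ∈ p, c k < hi
  | x, t, hl, hx, hex => by
    by_cases hx' : hi ≤ c x
    · exact ⟨[], x, by simp, le_antisymm hx hx', by simp⟩
    push Not at hx'
    cases t with
    | nil =>
      obtain ⟨k, hk, hck⟩ := hex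
      rw [mem_singleton.mp hk] at hck
      exact absurd hck hx'.not_ge
    | cons y t =>
      have hxy := (isChain_cons_cons.mp hl).1
      have hex' : ∃ k ∈ y :: t, hi ≤ c k := by
        obtain ⟨k, hk, hck⟩ := hex
        rcases mem_cons.mp hk with rfl | hk
        · exact absurd hck hx'.not_ge
        · exact ⟨k, hk, hck⟩
      obtain ⟨p, z, hpre, hz, hp⟩ := exists_prefix_to_level hi hl.tail (by omega) hex'
      refine ⟨x :: p, z, cons_prefix_cons.mpr ⟨rfl, hpre⟩, hz, ?_⟩
      rintro k (_ | ⟨_, hk⟩)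
      exacts [hx', hp k hk]

theorem exists_infix_between_levels {lo hi : ℤ} (hlohi : lo ≤ hi) {l : List α}
    (hl : l.IsChain (fun a b => c b ≤ c a + 1)) {x y : α} (hx : l.head? = some x)
    (hy : l.getLast? = some y) (hcx : c x ≤ lo) (hcy : hi < c y) :
    ∃ J, J <:+: l ∧ J ≠ [] ∧ (∀ k ∈ J, lo ≤ c k ∧ c k ≤ hi) ∧
      (∀ k ∈ J, c k = lo ↔ J.head? = some k) ∧
      (∀ k ∈ J, c k = hi ↔ J.getLast? = some k) := by
  obtain ⟨x', t, hsuf, hx', ht⟩ := exists_suffix_from_level c lo hl ⟨x, mem_of_head? hx, hcx⟩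
    fun y' hy' => by obtain rfl : y = y' := (by simpa [hy] using hy'); omega
  have hy_mem : y ∈ x' :: t := by
    obtain ⟨s, rfl⟩ := hsuf
    rw [getLast?_append_of_ne_nil _ (cons_ne_nil _ _)] at hy
    exact mem_of_getLast? hy
  obtain ⟨p, z, hpre, hz, hp⟩ := exists_prefix_to_level c hi (hl.suffix hsuf) (by omega)
    ⟨y, hy_mem, hcy.le⟩
  have hsub : ∀ k ∈ p ++ [z], k = x' ∨ k ∈ t := fun k hk => mem_cons.mp (hpre.subset hk)
  have hhead : (p ++ [z]).head? = some x' := by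
    obtain ⟨s, hs⟩ := hpre
    cases p <;> simp_all
  have hlast : (p ++ [z]).getLast? = some z := getLast?_concat
  refine ⟨p ++ [z], hpre.isInfix.trans hsuf.isInfix, by simp, fun k hk => ⟨?_, ?_⟩,
    fun k hk => ?_, fun k hk => ?_⟩
  · rcases hsub k hk with rfl | hk
    exacts [hx'.ge, (ht k hk).le]
  · rcases mem_append.mp hk with hk | hk
    · exact (hp k hk).le
    · rw [mem_singleton.mp hk, hz]
  · rw [hhead, Option.some_inj]
    rcases hsub k hk with rfl | hk
    · simpa using hx'
    · exact ⟨fun h => absurd h (ht k hk).ne', fun h => by rw [← h] at hk ⊢; exact hx'⟩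
  · rw [hlast, Option.some_inj]
    rcases mem_append.mp hk with hk | hk
    · exact ⟨fun h => absurd h (hp k hk).ne, fun h => by rw [← h] at hk ⊢; exact hz⟩
    · rw [mem_singleton.mp hk]
      simpa using hz

end List

namespace SimpleGraph

variable {V : Type*} {G : SimpleGraph V}

theorem Walk.exists_nodup_chain_between_levels [DecidableEq V] (c : V → ℤ)
    (hc : ∀ u v, G.Adj u v → c v ≤ c u + 1) {u v : V} (p : G.Walk u v) {lo hi : ℤ}
    (hlohi : lo ≤ hi) (hu : c u ≤ lo) (hv : hi < c v) :
    ∃ J : List V, J ≠ [] ∧ J.Nodup ∧ J.IsChain G.Adj ∧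
      (∀ k ∈ J, k ∈ p.support ∧ lo ≤ c k ∧ c k ≤ hi) ∧
      (∀ k ∈ J, c k = lo ↔ J.head? = some k) ∧
      (∀ k ∈ J, c k = hi ↔ J.getLast? = some k) := by
  have hchain := p.bypass.isChain_adj_support
  obtain ⟨J, hinf, hne, hbounds, hhead, hlast⟩ := List.exists_infix_between_levels c hlohi
    (hchain.imp fun _ _ => hc _ _) (by rw [← p.bypass.cons_tail_support]; rfl)
    (by rw [List.getLast?_eq_some_getLast p.bypass.support_ne_nil, getLast_support]) hu hv
  exact ⟨J, hne, p.bypass_isPath.support_nodup.sublist hinf.sublist, hchain.infix hinf,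
    fun k hk => ⟨p.support_bypass_subset_support (hinf.subset hk), hbounds k hk⟩, hhead, hlast⟩

theorem exists_walk_iterate {E : Type*} {P : V → Prop} {S : E → Prop} {f : E → E}
    (φ : E → V) {e : E} (he : S e) (hS : ∀ e, S e → S (f e))
    (hstep : ∀ e, S e → ∃ p : G.Walk (φ e) (φ (f e)), ∀ k ∈ p.support, P k) :
    ∀ i, ∃ p : G.Walk (φ e) (φ (f^[i] e)), ∀ k ∈ p.support, P k
  | 0 => by
    obtain ⟨p, hp⟩ := hstep e he
    exact ⟨.nil, by simpa using hp _ p.start_mem_support⟩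
  | i + 1 => by
    obtain ⟨p, hp⟩ := exists_walk_iterate φ he hS hstep i
    obtain ⟨q, hq⟩ := hstep _ (Function.Iterate.rec S he hS i)
    rw [Function.iterate_succ_apply']
    exact ⟨p.append q, fun k hk => (Walk.mem_support_append_iff p q).mp hk |>.elim (hp k) (hq k)⟩

end SimpleGraph

def rotCW (v : ℤ × ℤ) : ℤ × ℤ := (v.2, -v.1)

/-- An oriented edge of the dual lattice is encoded by the pair `(r, l)` of the cells on its right
and on its left; it points in the direction `heading (r, l)`. -/
def heading (e : (ℤ × ℤ) × (ℤ × ℤ)) : ℤ × ℤ := rotCW (e.2 - e.1)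

def IsInterface (g : ℤ × ℤ → Bool) (e : (ℤ × ℤ) × (ℤ × ℤ)) : Prop :=
  g e.1 = true ∧ g e.2 = false ∧ plusAdj e.1 e.2

/-- One step along the interface with the occupied cells on the right: turn right, go straight
or turn left according to the colours of the two cells ahead. -/
def explore (g : ℤ × ℤ → Bool) (e : (ℤ × ℤ) × (ℤ × ℤ)) : (ℤ × ℤ) × (ℤ × ℤ) :=
  if g (e.1 + heading e) = false then (e.1, e.1 + heading e)
  else if g (e.2 + heading e) = false then (e.1 + heading e, e.2 + heading e)
  else (e.2 + heading e, e.2)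

def unexplore (g : ℤ × ℤ → Bool) (e : (ℤ × ℤ) × (ℤ × ℤ)) : (ℤ × ℤ) × (ℤ × ℤ) :=
  if g (e.1 - heading e) = false then (e.1, e.1 - heading e)
  else if g (e.2 - heading e) = false then (e.1 - heading e, e.2 - heading e)
  else (e.2 - heading e, e.2)

section Exploration

variable {g : ℤ × ℤ → Bool} {e : (ℤ × ℤ) × (ℤ × ℤ)}

theorem explore_cases (g : ℤ × ℤ → Bool) (e : (ℤ × ℤ) × (ℤ × ℤ)) :
    (g (e.1 + heading e) = false ∧ explore g e = (e.1, e.1 + heading e)) ∨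
    (g (e.1 + heading e) = true ∧ g (e.2 + heading e) = false ∧
      explore g e = (e.1 + heading e, e.2 + heading e)) ∨
    (g (e.1 + heading e) = true ∧ g (e.2 + heading e) = true ∧
      explore g e = (e.2 + heading e, e.2)) := by
  unfold explore
  split_ifs <;> simp_all

theorem adj_ahead_of_plusAdj (h : plusAdj e.1 e.2) :
    plusAdj e.1 (e.1 + heading e) ∧ plusAdj (e.1 + heading e) (e.2 + heading e) ∧
      plusAdj (e.2 + heading e) e.2 ∧ starAdj e.2 (e.1 + heading e) ∧
      starAdj e.2 (e.2 + heading e) := by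
  simp only [plusAdj, starAdj, heading, rotCW, abs_eq_max_neg, Prod.fst_add, Prod.snd_add,
    Prod.fst_sub, Prod.snd_sub] at h ⊢
  omega

theorem isInterface_explore (h : IsInterface g e) : IsInterface g (explore g e) := by
  obtain ⟨hr, hl, hadj⟩ := h
  obtain ⟨hrr, hss, hll, -⟩ := adj_ahead_of_plusAdj hadj
  rcases explore_cases g e with ⟨h1, he⟩ | ⟨h1, h2, he⟩ | ⟨h1, h2, he⟩ <;> rw [he]
  exacts [⟨hr, h1, hrr⟩, ⟨h1, h2, hss⟩, ⟨h2, hl, hll⟩]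

theorem isInterface_iterate_explore (h : IsInterface g e) (i : ℕ) :
    IsInterface g ((explore g)^[i] e) :=
  Function.Iterate.rec _ h (fun _ => isInterface_explore) i

theorem unexplore_explore (h : IsInterface g e) : unexplore g (explore g e) = e := by
  obtain ⟨hr, hl, -⟩ := h
  rcases explore_cases g e with ⟨h1, he⟩ | ⟨h1, h2, he⟩ | ⟨h1, h2, he⟩ <;> rw [he]
  · have hd : heading (e.1, e.1 + heading e) = e.1 - e.2 := by
      ext <;> simp [heading, rotCW]
    simp [unexplore, hd, hl]
  · have hd : heading (e.1 + heading e, e.2 + heading e) = heading e := by simp [heading]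
    simp [unexplore, hd, hr, hl]
  · have hd : heading (e.2 + heading e, e.2) = e.2 - e.1 := by
      ext <;> simp [heading, rotCW]
    have hfr : e.2 + heading e - (e.2 - e.1) = e.1 + heading e := by abel
    simp [unexplore, hd, hfr, hr, h1]

theorem unexplore_iterate_explore_iterate (h : IsInterface g e) :
    ∀ k, (unexplore g)^[k] ((explore g)^[k] e) = e
  | 0 => rfl
  | k + 1 => by
    rw [Function.iterate_succ_apply, Function.iterate_succ_apply',
      unexplore_explore (isInterface_iterate_explore h k), unexplore_iterate_explore_iterate h k]

theorem exists_iterate_explore_eq_unexplore (h : IsInterface g e) {i j : ℕ} (hij : i < j)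
    (heq : (explore g)^[i] e = (explore g)^[j] e) :
    ∃ p, (explore g)^[p] e = unexplore g e := by
  obtain ⟨p, rfl⟩ : ∃ p, j = i + (p + 1) := ⟨j - i - 1, by omega⟩
  have hret : (explore g)^[p + 1] e = e := by
    have := congrArg (unexplore g)^[i] heq
    rwa [Function.iterate_add_apply, unexplore_iterate_explore_iterate h,
      unexplore_iterate_explore_iterate (isInterface_iterate_explore h _), eq_comm] at this
  refine ⟨p, ?_⟩
  rw [← unexplore_explore (isInterface_iterate_explore h p),
    ← Function.iterate_succ_apply' (explore g) p e, hret]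

theorem exists_starWalk_explore (h : IsInterface g e) :
    ∃ p : starGraph.Walk e.2 (explore g e).2, ∀ k ∈ p.support, g k = false := by
  obtain ⟨-, hl, hadj⟩ := h
  obtain ⟨-, -, -, hls, hll⟩ := adj_ahead_of_plusAdj hadj
  rcases explore_cases g e with ⟨h1, he⟩ | ⟨h1, h2, he⟩ | ⟨h1, h2, he⟩ <;> rw [he]
  · refine ⟨.cons hls .nil, ?_⟩
    show ∀ k ∈ [e.2, e.1 + heading e], g k = false
    simp [hl, h1]
  · refine ⟨.cons hll .nil, ?_⟩
    show ∀ k ∈ [e.2, e.2 + heading e], g k = false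
    simp [hl, h2]
  · exact ⟨.nil, by simp [hl]⟩

theorem exists_plusWalk_explore (h : IsInterface g e) :
    ∃ p : plusGraph.Walk e.1 (explore g e).1, ∀ k ∈ p.support, g k = true := by
  obtain ⟨hr, -, hadj⟩ := h
  obtain ⟨hrr, hss, -⟩ := adj_ahead_of_plusAdj hadj
  rcases explore_cases g e with ⟨h1, he⟩ | ⟨h1, h2, he⟩ | ⟨h1, h2, he⟩ <;> rw [he]
  · exact ⟨.nil, by simp [hr]⟩
  · refine ⟨.cons hrr .nil, ?_⟩
    show ∀ k ∈ [e.1, e.1 + heading e], g k = true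
    simp [hr, h1]
  · refine ⟨.cons hrr (.cons hss .nil), ?_⟩
    show ∀ k ∈ [e.1, e.1 + heading e, e.2 + heading e], g k = true
    simp [hr, h1, h2]

theorem unexplore_eq_sub_heading (h1 : g (e.1 - heading e) = true)
    (h2 : g (e.2 - heading e) = false) :
    unexplore g e = (e.1 - heading e, e.2 - heading e) := by
  simp [unexplore, h1, h2]

end Exploration

def extendColouring (m n : ℤ) (ω : ℤ × ℤ → Bool) (k : ℤ × ℤ) : Bool :=
  if 1 ≤ k.1 ∧ k.1 ≤ m ∧ 1 ≤ k.2 ∧ k.2 ≤ n then ω k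
  else decide ((k.1 ≤ 0 ∧ k.2 ≤ n) ∨ (m + 1 ≤ k.1 ∧ 1 ≤ k.2))

/-- The four rays along which the interface of `extendColouring m n ω` runs off to infinity.
The exploration comes in along the first and third and leaves along the second and fourth, whose
first edges are `((0, 0), (1, 0))` and `((m + 1, n + 1), (m, n + 1))`. -/
def OnRay (m n : ℤ) : (ℤ × ℤ) × (ℤ × ℤ) → Prop
  | ((a, b), (c, d)) =>
    (a ≤ -1 ∧ b = n ∧ c = a ∧ d = n + 1) ∨ (a = 0 ∧ b ≤ 0 ∧ c = 1 ∧ d = b) ∨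
    (m + 2 ≤ a ∧ b = 1 ∧ c = a ∧ d = 0) ∨ (a = m + 1 ∧ n + 1 ≤ b ∧ c = m ∧ d = b)

section ExtendColouring

variable {m n : ℤ} {ω : ℤ × ℤ → Bool} {k : ℤ × ℤ}

theorem extendColouring_of_left (h1 : k.1 ≤ 0) (h2 : k.2 ≤ n) :
    extendColouring m n ω k = true := by
  rw [extendColouring, if_neg (by omega), decide_eq_true_iff]
  omega

theorem extendColouring_of_right (h1 : m + 1 ≤ k.1) (h2 : 1 ≤ k.2) :
    extendColouring m n ω k = true := by
  rw [extendColouring, if_neg (by omega), decide_eq_true_iff]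
  omega

theorem extendColouring_of_top (h1 : k.1 ≤ m) (h2 : n + 1 ≤ k.2) :
    extendColouring m n ω k = false := by
  rw [extendColouring, if_neg (by omega), decide_eq_false_iff_not]
  omega

theorem extendColouring_of_bottom (h1 : 1 ≤ k.1) (h2 : k.2 ≤ 0) :
    extendColouring m n ω k = false := by
  rw [extendColouring, if_neg (by omega), decide_eq_false_iff_not]
  omega

theorem extendColouring_eq_true (h : extendColouring m n ω k = true) :
    inRect m n k ∧ ω k = true ∨ (k.1 ≤ 0 ∧ k.2 ≤ n) ∨ (m + 1 ≤ k.1 ∧ 1 ≤ k.2) := by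
  unfold extendColouring at h
  split_ifs at h with hk
  · exact .inl ⟨hk, h⟩
  · exact .inr (by simpa using h)

theorem extendColouring_eq_false (hm : 0 ≤ m) (h : extendColouring m n ω k = false) :
    inRect m n k ∧ ω k = false ∨ (k.1 ≤ m ∧ n + 1 ≤ k.2) ∨ (1 ≤ k.1 ∧ k.2 ≤ 0) := by
  unfold extendColouring at h
  split_ifs at h with hk
  · exact .inl ⟨hk, h⟩
  · right
    simp only [decide_eq_false_iff_not] at h
    omega

theorem isInterface_start (hm : 0 ≤ m) :
    IsInterface (extendColouring m n ω) ((0, n), (0, n + 1)) :=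
  ⟨extendColouring_of_left le_rfl le_rfl, extendColouring_of_top hm le_rfl,
    by simp [plusAdj]⟩

theorem OnRay.unexplore {e : (ℤ × ℤ) × (ℤ × ℤ)} (hm : 0 ≤ m) (hn : 1 ≤ n) (h : OnRay m n e)
    (hA : e ≠ ((0, 0), (1, 0))) (hB : e ≠ ((m + 1, n + 1), (m, n + 1))) :
    OnRay m n (unexplore (extendColouring m n ω) e) := by
  obtain ⟨⟨a, b⟩, ⟨c, d⟩⟩ := e
  rcases h with ⟨ha, rfl, rfl, rfl⟩ | ⟨rfl, hb, rfl, rfl⟩ | ⟨ha, rfl, rfl, rfl⟩ |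
    ⟨rfl, hb, rfl, rfl⟩
  · rw [unexplore_eq_sub_heading (extendColouring_of_left ?_ ?_)
      (extendColouring_of_top ?_ ?_)] <;>
      simp only [heading, rotCW, Prod.mk_sub_mk, OnRay, true_and] <;> omega
  · simp only [ne_eq, Prod.mk.injEq, true_and, and_self] at hA
    rw [unexplore_eq_sub_heading (extendColouring_of_left ?_ ?_)
      (extendColouring_of_bottom ?_ ?_)] <;>
      simp only [heading, rotCW, Prod.mk_sub_mk, OnRay, and_true] <;> omega
  · rw [unexplore_eq_sub_heading (extendColouring_of_right ?_ ?_)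
      (extendColouring_of_bottom ?_ ?_)] <;>
      simp only [heading, rotCW, Prod.mk_sub_mk, OnRay, true_and] <;> omega
  · simp only [ne_eq, Prod.mk.injEq, true_and, and_self] at hB
    rw [unexplore_eq_sub_heading (extendColouring_of_right ?_ ?_)
      (extendColouring_of_top ?_ ?_)] <;>
      simp only [heading, rotCW, Prod.mk_sub_mk, OnRay, and_true] <;> omega

theorem mem_box_of_isInterface (hm : 0 ≤ m) (hn : 1 ≤ n) {e : (ℤ × ℤ) × (ℤ × ℤ)}
    (h : IsInterface (extendColouring m n ω) e) (hray : ¬ OnRay m n e) :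
    e ∈ Set.Icc (0, 1) (m + 1, n) ×ˢ Set.Icc (-1, 0) (m + 2, n + 1) := by
  obtain ⟨⟨a, b⟩, ⟨c, d⟩⟩ := e
  obtain ⟨hr, hl, hadj⟩ := h
  have hr' := extendColouring_eq_true hr
  have hl' := extendColouring_eq_false hm hl
  simp only [OnRay] at hray
  simp only [plusAdj, abs_eq_max_neg] at hadj
  simp only [inRect, Set.mem_prod, Set.mem_Icc, Prod.mk_le_mk] at hr' hl' ⊢
  omega

theorem exists_iterate_explore_eq_exit (hm : 0 ≤ m) (hn : 1 ≤ n) (ω : ℤ × ℤ → Bool) :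
    ∃ i, (explore (extendColouring m n ω))^[i] ((0, n), (0, n + 1)) = ((0, 0), (1, 0)) ∨
      (explore (extendColouring m n ω))^[i] ((0, n), (0, n + 1)) =
        ((m + 1, n + 1), (m, n + 1)) := by
  set g := extendColouring m n ω
  have he0 : IsInterface g ((0, n), (0, n + 1)) := isInterface_start hm
  by_contra! hexit
  -- Walking backwards from a ray one stays on it, and the start is on none.
  have hray : ∀ i, ¬ OnRay m n ((explore g)^[i] ((0, n), (0, n + 1))) := by
    intro i
    induction i with
    | zero => simp only [Function.iterate_zero_apply, OnRay]; omega
    | succ i ih =>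
      intro h
      apply ih
      rw [← unexplore_explore (isInterface_iterate_explore he0 i),
        ← Function.iterate_succ_apply' (explore g)]
      exact h.unexplore hm hn (hexit _).1 (hexit _).2
  obtain ⟨i, j, hij, heq⟩ := Set.Finite.exists_lt_map_eq_of_forall_mem
    (fun i => mem_box_of_isInterface hm hn (isInterface_iterate_explore he0 i) (hray i))
    ((Set.finite_Icc _ _).prod (Set.finite_Icc _ _))
  obtain ⟨p, hp⟩ := exists_iterate_explore_eq_unexplore he0 hij heq
  apply hray p
  rw [hp, unexplore_eq_sub_heading (extendColouring_of_left ?_ ?_)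
    (extendColouring_of_top ?_ ?_)] <;>
    simp only [heading, rotCW, Prod.mk_sub_mk, OnRay, true_and] <;> omega

theorem exists_vacant_TD_crossing_of_walk (hm : 0 ≤ m) (hn : 1 ≤ n)
    (p : starGraph.Walk (0, n + 1) (1, 0))
    (hp : ∀ k ∈ p.support, extendColouring m n ω k = false) :
    ∃ J, IsTDCrossing starAdj m n J ∧ ∀ k ∈ J, ω k = false := by
  have hc : ∀ u v, starGraph.Adj u v → -v.2 ≤ -u.2 + 1 := fun u v huv => by
    simp only [starGraph, starAdj, abs_eq_max_neg] at huv
    omega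
  obtain ⟨J, hne, hnd, hchain, hJ, hhead, hlast⟩ :=
    p.exists_nodup_chain_between_levels _ hc (lo := -n) (hi := -1) (by omega) (by simp)
      (by simp)
  have hcell : ∀ k ∈ J, inRect m n k ∧ ω k = false := fun k hk => by
    obtain ⟨hkp, hk⟩ := hJ k hk
    rcases extendColouring_eq_false hm (hp k hkp) with hk' | hk' | hk'
    · exact hk'
    all_goals omega
  refine ⟨J, ⟨hne, hnd, hchain, fun k hk => (hcell k hk).1, fun k hk => ?_, fun k hk => ?_⟩,
    fun k hk => (hcell k hk).2⟩
  · simpa using hhead k hk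
  · simpa using hlast k hk

theorem exists_occupied_LR_crossing_of_walk (hm : 1 ≤ m)
    (p : plusGraph.Walk (0, n) (m + 1, n + 1))
    (hp : ∀ k ∈ p.support, extendColouring m n ω k = true) :
    ∃ J, IsLRCrossing plusAdj m n J ∧ ∀ k ∈ J, ω k = true := by
  have hc : ∀ u v, plusGraph.Adj u v → v.1 ≤ u.1 + 1 := fun u v huv => by
    simp only [plusGraph, plusAdj, abs_eq_max_neg] at huv
    omega
  obtain ⟨J, hne, hnd, hchain, hJ, hhead, hlast⟩ :=
    p.exists_nodup_chain_between_levels _ hc (lo := 1) (hi := m) hm (by simp) (by simp)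
  have hcell : ∀ k ∈ J, inRect m n k ∧ ω k = true := fun k hk => by
    obtain ⟨hkp, hk⟩ := hJ k hk
    rcases extendColouring_eq_true (hp k hkp) with hk' | hk' | hk'
    · exact hk'
    all_goals omega
  exact ⟨J, ⟨hne, hnd, hchain, fun k hk => (hcell k hk).1, hhead, hlast⟩,
    fun k hk => (hcell k hk).2⟩

end ExtendColouring

/-- If `Λ` contains no occupied plus connected left-right crossing, then it contains
a vacant star connected top-down crossing. -/
theorem vacant_star_TD_of_no_occupied_plus_LR
    (m n : ℤ) (hm : 1 ≤ m) (hn : 1 ≤ n) (ω : ℤ × ℤ → Bool)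
    (h : ¬ ∃ J : List (ℤ × ℤ), IsLRCrossing plusAdj m n J ∧ ∀ k ∈ J, ω k = true) :
    ∃ J : List (ℤ × ℤ), IsTDCrossing starAdj m n J ∧ ∀ k ∈ J, ω k = false := by
  have hm₀ : 0 ≤ m := by omega
  have he0 : IsInterface (extendColouring m n ω) ((0, n), (0, n + 1)) := isInterface_start hm₀
  obtain ⟨i, hA | hB⟩ := exists_iterate_explore_eq_exit hm₀ hn ω
  · have hwalk := SimpleGraph.exists_walk_iterate Prod.snd he0 (fun _ => isInterface_explore)
      (fun _ => exists_starWalk_explore) i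
    rw [hA] at hwalk
    obtain ⟨p, hp⟩ := hwalk
    exact exists_vacant_TD_crossing_of_walk hm₀ hn p hp
  · have hwalk := SimpleGraph.exists_walk_iterate Prod.fst he0 (fun _ => isInterface_explore)
      (fun _ => exists_plusWalk_explore) i
    rw [hB] at hwalk
    obtain ⟨p, hp⟩ := hwalk
    exact absurd (exists_occupied_LR_crossing_of_walk hm p hp) h
end
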